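/- arXiv:cs/0609049 — 2 statements merged into one kernel-verified Lean document; each statement's English description precedes it below -/
import Mathlib

section
/- Suppose m(n) is an integer-valued monotonically increasing function with m(n) → ∞ and m(n) = o(n^{1/3}). Run, for each n independently, the block exponential-weighting algorithm with block size m(n) and expert set F_{m(n)} of λ scandictors for V_{m(n)} on the restriction x_{V_n} of an infinite individual array x. Then for every such x, (L_alg(x_{V_n}) − L_min(x_{V_n}))/n² → 0 as n → ∞ with probability 1 with respect to the algorithm's randomized scandictor selections, where L_alg is the realized cumulative loss of the algorithm and L_min is the cumulative loss of the best scandictor in F_{m(n)} operating block-wise on x_{V_n}. -/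
open MeasureTheory Filter Real

namespace Scandiction

variable {A D B : Type*}

def visits (Ψ : ∀ t : ℕ, (Fin t → A) → B) (x : B → A) : ℕ → B
  | t => Ψ t fun i : Fin t => x (visits Ψ x i)
  decreasing_by exact i.isLt

def IsValidScan [Fintype B] (Ψ : ∀ t : ℕ, (Fin t → A) → B) : Prop :=
  ∀ x : B → A, Function.Bijective fun t : Fin (Fintype.card B) => visits Ψ x t.1

noncomputable def cumLoss [Fintype B] (l : A → D → ℝ)
    (Ψ : ∀ t : ℕ, (Fin t → A) → B) (F : ∀ t : ℕ, (Fin t → A) → D) (x : B → A) : ℝ :=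
  ∑ t : Fin (Fintype.card B),
    l (x (visits Ψ x t.1)) (F t.1 fun i : Fin t.1 => x (visits Ψ x i.1))

structure Scandictor (A D B : Type*) [Fintype B] where
  scan : ∀ t : ℕ, (Fin t → A) → B
  pred : ∀ t : ℕ, (Fin t → A) → D
  valid : IsValidScan scan

noncomputable def sLoss [Fintype B] (l : A → D → ℝ) (S : Scandictor A D B) (x : B → A) : ℝ :=
  cumLoss l S.scan S.pred x

section ExpWeighting

variable {J : Type*}

/-- Cumulative loss of expert `j` on the first `i` blocks, given per-block losses `bl`. -/
noncomputable def cumBlockLoss (bl : J → ℕ → ℝ) (j : J) (i : ℕ) : ℝ :=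
  ∑ a ∈ Finset.range i, bl j a

/-- The exponential-weighting probability assigned to expert `j` after `i` blocks. -/
noncomputable def expWeight [Fintype J] (η : ℝ) (bl : J → ℕ → ℝ) (i : ℕ) (j : J) : ℝ :=
  Real.exp (-η * cumBlockLoss bl j i) / ∑ j' : J, Real.exp (-η * cumBlockLoss bl j' i)

/-- The parameter `η = 2√(2 log λ) / (m · l_max · (n+m))`. -/
noncomputable def ewEta (n m : ℕ) (lmax : ℝ) (lam : ℕ) : ℝ :=
  2 * Real.sqrt (2 * Real.log lam) / ((m : ℝ) * lmax * ((n : ℝ) + (m : ℝ)))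

/-- `K = ⌈n/m⌉ - 1`. -/
def Kq (n m : ℕ) : ℕ := (n + m - 1) / m - 1

/-- Value of the array `x` at site `(p,q)` (arbitrary value off the array). -/
noncomputable def siteVal [Nonempty A] {n : ℕ} (x : Fin n × Fin n → A) (p q : ℕ) : A :=
  if h : p < n ∧ q < n then x (⟨p, h.1⟩, ⟨q, h.2⟩) else Classical.arbitrary A

/-- The `a`-th full `m × m` block of the `n × n` array `x`, the `K × K` full blocks being
indexed in raster order. -/
noncomputable def blockImage [Nonempty A] (n m : ℕ) (x : Fin n × Fin n → A) (a : ℕ) :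
    Fin m × Fin m → A :=
  fun p => siteVal x ((a / Kq n m) * m + p.1.1) ((a % Kq n m) * m + p.2.1)

/-- Per-block loss of expert `j` (a scandictor for `V_m`, restarted on each full block). -/
noncomputable def blockLoss [Nonempty A] (l : A → D → ℝ) (n m : ℕ)
    (S : J → Scandictor A D (Fin m × Fin m)) (x : Fin n × Fin n → A) (j : J) (a : ℕ) : ℝ :=
  sLoss l (S j) (blockImage n m x a)

/-- Total loss charged on the `2K+1` boundary blocks: `l_max` per site. -/
noncomputable def boundaryLoss (n m : ℕ) (lmax : ℝ) : ℝ :=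
  ((n * n - Kq n m * Kq n m * (m * m) : ℕ) : ℝ) * lmax

/-- Expected cumulative loss of the block exponential-weighting algorithm over `T` blocks
(expectation over its internal randomization). -/
noncomputable def ewExpectedLoss [Fintype J] (η : ℝ) (bl : J → ℕ → ℝ) (T : ℕ) : ℝ :=
  ∑ i ∈ Finset.range T, ∑ j : J, expWeight η bl i j * bl j i

/-- Realized cumulative loss of the algorithm over `T` blocks under the selections `ω`. -/
noncomputable def ewRealizedLoss (bl : J → ℕ → ℝ) (T : ℕ) (ω : ℕ → J) : ℝ :=
  ∑ i ∈ Finset.range T, bl (ω i) i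

/-- Realized cumulative loss, selections indexed by `Fin T`. -/
noncomputable def ewRealizedLossF (bl : J → ℕ → ℝ) (T : ℕ) (ω : Fin T → J) : ℝ :=
  ∑ i : Fin T, bl (ω i) i.1

/-- Probability that the algorithm's independent randomized selections realize `ω`. -/
noncomputable def selProb [Fintype J] (η : ℝ) (bl : J → ℕ → ℝ) (T : ℕ) (ω : Fin T → J) : ℝ :=
  ∏ i : Fin T, expWeight η bl i.1 (ω i)

end ExpWeighting

/-- restriction of an infinite data array to `V_n`. -/
def restrV {A : Type*} (n : ℕ) (x : ℤ × ℤ → A) : Fin n × Fin n → A :=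
  fun p => x ((p.1 : ℤ), (p.2 : ℤ))

section AuxProof

open Finset

variable {J : Type*} [Fintype J]

private lemma sum_weight_exp_le {p g : J → ℝ} {c : ℝ} (hc : 0 ≤ c)
    (hp : ∀ j, 0 ≤ p j) (hps : ∑ j, p j = 1)
    (hg0 : ∀ j, 0 ≤ g j) (hgc : ∀ j, g j ≤ c) (s : ℝ) :
    ∑ j, p j * Real.exp (s * g j) ≤ Real.exp (s * (∑ j, p j * g j) + s ^ 2 * c ^ 2 / 2) := by
  rcases eq_or_lt_of_le hc with hc0 | hc0
  · have hg : ∀ j, g j = 0 := fun j => le_antisymm (hc0 ▸ hgc j) (hg0 j)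
    simp only [hg, mul_zero, Real.exp_zero, mul_one, hps, ← hc0]
    simp
  · set e : ℝ := ∑ j, p j * g j with he
    have hy : ∀ j, |g j - e| ≤ c := by
      intro j
      have h1 : 0 ≤ e := Finset.sum_nonneg fun j _ => mul_nonneg (hp j) (hg0 j)
      have h2 : e ≤ c := by
        calc e ≤ ∑ j, p j * c := Finset.sum_le_sum fun j _ =>
                mul_le_mul_of_nonneg_left (hgc j) (hp j)
          _ = c := by rw [← Finset.sum_mul, hps, one_mul]
      rw [abs_le]
      constructor <;> nlinarith [hg0 j, hgc j]
    have key : ∀ j, Real.exp (s * (g j - e)) ≤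
        ((c - (g j - e)) / (2 * c)) * Real.exp (s * (-c)) +
        ((c + (g j - e)) / (2 * c)) * Real.exp (s * c) := by
      intro j
      have hy' := hy j
      rw [abs_le] at hy'
      have ha : 0 ≤ (c - (g j - e)) / (2 * c) := by
        apply div_nonneg <;> nlinarith
      have hb : 0 ≤ (c + (g j - e)) / (2 * c) := by
        apply div_nonneg <;> nlinarith
      have hab : (c - (g j - e)) / (2 * c) + (c + (g j - e)) / (2 * c) = 1 := by
        field_simp
        ring
      have hconv := convexOn_exp.2 (Set.mem_univ (s * (-c))) (Set.mem_univ (s * c)) ha hb hab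
      simp only [smul_eq_mul] at hconv
      have harg : (c - (g j - e)) / (2 * c) * (s * (-c)) +
          (c + (g j - e)) / (2 * c) * (s * c) = s * (g j - e) := by
        field_simp
        ring
      rwa [harg] at hconv
    have hsy : ∑ j, p j * (g j - e) = 0 := by
      simp only [mul_sub, Finset.sum_sub_distrib, ← Finset.sum_mul, hps, one_mul, ← he]
      ring
    have hA : ∑ j, p j * ((c - (g j - e)) / (2 * c)) = 1 / 2 := by
      have : ∀ j, p j * ((c - (g j - e)) / (2 * c)) =
          (p j * c - p j * (g j - e)) * (2 * c)⁻¹ := fun j => by ring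
      rw [Finset.sum_congr rfl fun j _ => this j, ← Finset.sum_mul,
        Finset.sum_sub_distrib, ← Finset.sum_mul, hps, hsy, one_mul, sub_zero]
      field_simp
    have hB : ∑ j, p j * ((c + (g j - e)) / (2 * c)) = 1 / 2 := by
      have : ∀ j, p j * ((c + (g j - e)) / (2 * c)) =
          (p j * c + p j * (g j - e)) * (2 * c)⁻¹ := fun j => by ring
      rw [Finset.sum_congr rfl fun j _ => this j, ← Finset.sum_mul,
        Finset.sum_add_distrib, ← Finset.sum_mul, hps, hsy, one_mul, add_zero]
      field_simp
    calc ∑ j, p j * Real.exp (s * g j)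
        = Real.exp (s * e) * ∑ j, p j * Real.exp (s * (g j - e)) := by
          rw [Finset.mul_sum]
          refine Finset.sum_congr rfl fun j _ => ?_
          rw [mul_left_comm, ← Real.exp_add]
          ring_nf
      _ ≤ Real.exp (s * e) * ∑ j, p j *
            (((c - (g j - e)) / (2 * c)) * Real.exp (s * (-c)) +
             ((c + (g j - e)) / (2 * c)) * Real.exp (s * c)) := by
          refine mul_le_mul_of_nonneg_left (Finset.sum_le_sum fun j _ =>
            mul_le_mul_of_nonneg_left (key j) (hp j)) (Real.exp_nonneg _)
      _ = Real.exp (s * e) *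
            ((∑ j, p j * ((c - (g j - e)) / (2 * c))) * Real.exp (s * (-c)) +
             (∑ j, p j * ((c + (g j - e)) / (2 * c))) * Real.exp (s * c)) := by
          simp only [mul_add, Finset.sum_add_distrib, Finset.sum_mul, mul_assoc]
      _ = Real.exp (s * e) * Real.cosh (s * c) := by
          rw [hA, hB, Real.cosh_eq, mul_neg]
          ring
      _ ≤ Real.exp (s * e) * Real.exp ((s * c) ^ 2 / 2) := by
          exact mul_le_mul_of_nonneg_left (Real.cosh_le_exp_half_sq _) (Real.exp_nonneg _)
      _ = Real.exp (s * (∑ j, p j * g j) + s ^ 2 * c ^ 2 / 2) := by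
          rw [← Real.exp_add, ← he]
          ring_nf

private lemma exp_sum_le_sum_exp {p v : J → ℝ}
    (hp : ∀ j, 0 ≤ p j) (hps : ∑ j, p j = 1) :
    Real.exp (∑ j, p j * v j) ≤ ∑ j, p j * Real.exp (v j) := by
  have := convexOn_exp.map_sum_le (t := Finset.univ) (w := p) (p := v)
    (fun j _ => hp j) hps (fun j _ => Set.mem_univ _)
  simpa only [smul_eq_mul] using this

end AuxProof
section AuxProof2

open Finset ProbabilityTheory

variable {J : Type*} [Fintype J]

private lemma expWeight_nonneg (η : ℝ) (bl : J → ℕ → ℝ) (i : ℕ) (j : J) :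
    0 ≤ expWeight η bl i j :=
  div_nonneg (Real.exp_nonneg _) (Finset.sum_nonneg fun _ _ => Real.exp_nonneg _)

private noncomputable def Wf (η : ℝ) (bl : J → ℕ → ℝ) (i : ℕ) : ℝ :=
  ∑ j : J, Real.exp (-η * cumBlockLoss bl j i)

variable [Nonempty J]

private lemma Wf_pos (η : ℝ) (bl : J → ℕ → ℝ) (i : ℕ) : 0 < Wf η bl i :=
  Finset.sum_pos (fun _ _ => Real.exp_pos _) Finset.univ_nonempty

private lemma sum_expWeight (η : ℝ) (bl : J → ℕ → ℝ) (i : ℕ) :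
    ∑ j, expWeight η bl i j = 1 := by
  simp only [expWeight]
  rw [← Finset.sum_div]
  exact div_self (Wf_pos η bl i).ne'

private lemma Wf_zero (η : ℝ) (bl : J → ℕ → ℝ) : Wf η bl 0 = (Fintype.card J : ℝ) := by
  simp [Wf, cumBlockLoss, Finset.card_univ]

private lemma cumBlockLoss_succ (bl : J → ℕ → ℝ) (j : J) (i : ℕ) :
    cumBlockLoss bl j (i + 1) = cumBlockLoss bl j i + bl j i :=
  Finset.sum_range_succ _ _

private lemma Wf_succ (η : ℝ) (bl : J → ℕ → ℝ) (i : ℕ) :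
    Wf η bl (i + 1) = Wf η bl i * ∑ j, expWeight η bl i j * Real.exp (-η * bl j i) := by
  have hW : (∑ j' : J, Real.exp (-η * cumBlockLoss bl j' i)) ≠ 0 := (Wf_pos η bl i).ne'
  rw [Finset.mul_sum]
  refine Finset.sum_congr rfl fun j _ => ?_
  rw [cumBlockLoss_succ, expWeight,
    show -η * (cumBlockLoss bl j i + bl j i) =
      -η * cumBlockLoss bl j i + -η * bl j i by ring, Real.exp_add]
  show _ = Wf η bl i * _
  rw [Wf]
  field_simp

private lemma ewExpectedLoss_succ (η : ℝ) (bl : J → ℕ → ℝ) (T : ℕ) :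
    ewExpectedLoss η bl (T + 1) =
      ewExpectedLoss η bl T + ∑ j, expWeight η bl T j * bl j T :=
  Finset.sum_range_succ _ _

private lemma Wf_le (η : ℝ) {bl : J → ℕ → ℝ} {c : ℝ} (hc : 0 ≤ c)
    (hbl : ∀ j i, 0 ≤ bl j i ∧ bl j i ≤ c) (T : ℕ) :
    Wf η bl T ≤ (Fintype.card J : ℝ) *
      Real.exp (-η * ewExpectedLoss η bl T + T * (η ^ 2 * c ^ 2 / 2)) := by
  induction T with
  | zero => simp [Wf_zero, ewExpectedLoss]
  | succ T ih =>
    rw [Wf_succ]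
    have hstep : ∑ j, expWeight η bl T j * Real.exp (-η * bl j T) ≤
        Real.exp (-η * (∑ j, expWeight η bl T j * bl j T) + η ^ 2 * c ^ 2 / 2) := by
      have h := sum_weight_exp_le (p := expWeight η bl T) (g := fun j => bl j T) hc
        (expWeight_nonneg η bl T) (sum_expWeight η bl T)
        (fun j => (hbl j T).1) (fun j => (hbl j T).2) (-η)
      simp only [neg_mul] at h ⊢
      convert h using 3 <;> ring
    have hS0 : 0 ≤ ∑ j, expWeight η bl T j * Real.exp (-η * bl j T) :=
      Finset.sum_nonneg fun j _ =>
        mul_nonneg (expWeight_nonneg η bl T j) (Real.exp_nonneg _)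
    calc Wf η bl T * ∑ j, expWeight η bl T j * Real.exp (-η * bl j T)
        ≤ ((Fintype.card J : ℝ) *
            Real.exp (-η * ewExpectedLoss η bl T + T * (η ^ 2 * c ^ 2 / 2))) *
            (∑ j, expWeight η bl T j * Real.exp (-η * bl j T)) :=
          mul_le_mul_of_nonneg_right ih hS0
      _ ≤ ((Fintype.card J : ℝ) *
            Real.exp (-η * ewExpectedLoss η bl T + T * (η ^ 2 * c ^ 2 / 2))) *
            Real.exp (-η * (∑ j, expWeight η bl T j * bl j T) + η ^ 2 * c ^ 2 / 2) := by
          refine mul_le_mul_of_nonneg_left hstep (by positivity)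
      _ = (Fintype.card J : ℝ) *
            Real.exp (-η * ewExpectedLoss η bl (T + 1) + (T + 1 : ℕ) * (η ^ 2 * c ^ 2 / 2)) := by
          rw [mul_assoc, ← Real.exp_add, ewExpectedLoss_succ]
          push_cast
          ring_nf

private lemma Wf_ge (η : ℝ) (bl : J → ℕ → ℝ) (T : ℕ) :
    (Fintype.card J : ℝ) * Real.exp (-η * ewExpectedLoss η bl T) ≤ Wf η bl T := by
  induction T with
  | zero => simp [Wf_zero, ewExpectedLoss]
  | succ T ih =>
    rw [Wf_succ]
    have hstep : Real.exp (-η * (∑ j, expWeight η bl T j * bl j T)) ≤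
        ∑ j, expWeight η bl T j * Real.exp (-η * bl j T) := by
      have h := exp_sum_le_sum_exp (p := expWeight η bl T) (v := fun j => -η * bl j T)
        (expWeight_nonneg η bl T) (sum_expWeight η bl T)
      have harg : ∑ j, expWeight η bl T j * (-η * bl j T) =
          -η * ∑ j, expWeight η bl T j * bl j T := by
        rw [Finset.mul_sum]
        exact Finset.sum_congr rfl fun j _ => by ring
      rwa [harg] at h
    calc (Fintype.card J : ℝ) * Real.exp (-η * ewExpectedLoss η bl (T + 1))
        = ((Fintype.card J : ℝ) * Real.exp (-η * ewExpectedLoss η bl T)) *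
            Real.exp (-η * (∑ j, expWeight η bl T j * bl j T)) := by
          rw [mul_assoc, ← Real.exp_add, ewExpectedLoss_succ]
          ring_nf
      _ ≤ Wf η bl T * Real.exp (-η * (∑ j, expWeight η bl T j * bl j T)) :=
          mul_le_mul_of_nonneg_right ih (Real.exp_nonneg _)
      _ ≤ Wf η bl T * ∑ j, expWeight η bl T j * Real.exp (-η * bl j T) :=
          mul_le_mul_of_nonneg_left hstep (Wf_pos η bl T).le

private lemma expected_ge_min {η : ℝ} (hη : 0 < η) (bl : J → ℕ → ℝ) (T : ℕ)
    (H : (Finset.univ : Finset J).Nonempty) :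
    Finset.univ.inf' H (fun j => cumBlockLoss bl j T) ≤ ewExpectedLoss η bl T := by
  set M := Finset.univ.inf' H (fun j => cumBlockLoss bl j T) with hM
  have h1 : Wf η bl T ≤ (Fintype.card J : ℝ) * Real.exp (-η * M) := by
    rw [Wf]
    calc ∑ j : J, Real.exp (-η * cumBlockLoss bl j T)
        ≤ ∑ _j : J, Real.exp (-η * M) := by
          refine Finset.sum_le_sum fun j _ => Real.exp_le_exp.2 ?_
          have := Finset.inf'_le (fun j => cumBlockLoss bl j T) (Finset.mem_univ j)
          rw [← hM] at this
          nlinarith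
      _ = (Fintype.card J : ℝ) * Real.exp (-η * M) := by
          rw [Finset.sum_const, Finset.card_univ, nsmul_eq_mul]
  have h2 := (Wf_ge η bl T).trans h1
  have hcard : (0 : ℝ) < (Fintype.card J : ℝ) := by
    exact_mod_cast Fintype.card_pos
  have h3 : Real.exp (-η * ewExpectedLoss η bl T) ≤ Real.exp (-η * M) :=
    le_of_mul_le_mul_left h2 hcard
  have h4 := Real.exp_le_exp.1 h3
  nlinarith

private lemma eta_expected_le {η : ℝ} (hη : 0 < η) {bl : J → ℕ → ℝ} {c : ℝ} (hc : 0 ≤ c)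
    (hbl : ∀ j i, 0 ≤ bl j i ∧ bl j i ≤ c) (T : ℕ)
    (H : (Finset.univ : Finset J).Nonempty) :
    η * ewExpectedLoss η bl T ≤
      η * Finset.univ.inf' H (fun j => cumBlockLoss bl j T) +
        Real.log (Fintype.card J : ℝ) + T * (η ^ 2 * c ^ 2 / 2) := by
  set M := Finset.univ.inf' H (fun j => cumBlockLoss bl j T) with hM
  obtain ⟨j₀, _, hj₀⟩ := Finset.exists_mem_eq_inf' H (fun j => cumBlockLoss bl j T)
  have h1 : Real.exp (-η * M) ≤ Wf η bl T := by
    rw [hM, hj₀, Wf]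
    exact Finset.single_le_sum (f := fun j => Real.exp (-η * cumBlockLoss bl j T))
      (fun j _ => Real.exp_nonneg _) (Finset.mem_univ j₀)
  have h2 := h1.trans (Wf_le η hc hbl T)
  have hcard : (0 : ℝ) < (Fintype.card J : ℝ) := by exact_mod_cast Fintype.card_pos
  have h3 := Real.log_le_log (Real.exp_pos _) h2
  rw [Real.log_exp, Real.log_mul hcard.ne' (Real.exp_ne_zero _), Real.log_exp] at h3
  linarith

end AuxProof2
section AuxProof3

open Finset ProbabilityTheory

variable {J : Type*} [Fintype J]

private lemma inf'_const_add {s : Finset J} (h : s.Nonempty) (a : ℝ) (f : J → ℝ) :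
    (s.inf' h fun j => a + f j) = a + s.inf' h f := by
  apply le_antisymm
  · obtain ⟨j₀, hj₀, hj⟩ := Finset.exists_mem_eq_inf' h f
    rw [hj]
    exact Finset.inf'_le _ hj₀
  · exact Finset.le_inf' _ _ fun j hj => add_le_add le_rfl (Finset.inf'_le _ hj)

private lemma integral_comp_fintype {Ω : Type*} [MeasurableSpace Ω] (μ : Measure Ω)
    [IsProbabilityMeasure μ] [MeasurableSpace J] [MeasurableSingletonClass J]
    {Y : Ω → J} (hY : Measurable Y) (g : J → ℝ) {p : J → ℝ} (hp : ∀ j, 0 ≤ p j)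
    (hd : ∀ j, μ {ω | Y ω = j} = ENNReal.ofReal (p j)) :
    ∫ ω, g (Y ω) ∂μ = ∑ j, p j * g j := by
  classical
  have key : ∀ ω, g (Y ω) = ∑ j, (Y ⁻¹' {j}).indicator (fun _ => g j) ω := by
    intro ω
    have : ∀ j : J, (Y ⁻¹' {j}).indicator (fun _ => g j) ω =
        if Y ω = j then g j else 0 := by
      intro j
      simp [Set.indicator_apply]
    rw [Finset.sum_congr rfl fun j _ => this j, Finset.sum_ite_eq]
    simp
  calc ∫ ω, g (Y ω) ∂μ
      = ∫ ω, ∑ j, (Y ⁻¹' {j}).indicator (fun _ => g j) ω ∂μ := by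
        exact integral_congr_ae (Filter.Eventually.of_forall key)
    _ = ∑ j, ∫ ω, (Y ⁻¹' {j}).indicator (fun _ => g j) ω ∂μ := by
        refine integral_finset_sum _ fun j _ => ?_
        exact (integrable_const (g j)).indicator (hY (measurableSet_singleton j))
    _ = ∑ j, p j * g j := by
        refine Finset.sum_congr rfl fun j _ => ?_
        rw [integral_indicator_const _ (hY (measurableSet_singleton j))]
        have hpre : Y ⁻¹' {j} = {ω | Y ω = j} := by
          ext ω; simp
        rw [hpre, measureReal_def, hd j, ENNReal.toReal_ofReal (hp j), smul_eq_mul]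

private lemma concentration {Ω : Type*} [MeasurableSpace Ω] (μ : Measure Ω)
    [IsProbabilityMeasure μ] [MeasurableSpace J] [MeasurableSingletonClass J]
    {Y : ℕ → Ω → J} (hY : ∀ i, Measurable (Y i))
    (hind : iIndepFun (m := fun _ : ℕ => (inferInstance : MeasurableSpace J)) Y μ)
    {p : ℕ → J → ℝ} (hp : ∀ i j, 0 ≤ p i j)
    (hd : ∀ i j, μ {ω | Y i ω = j} = ENNReal.ofReal (p i j))
    (hps : ∀ i, ∑ j, p i j = 1)
    {bl : J → ℕ → ℝ} {c : ℝ} (hc : 0 < c) (hbl : ∀ j i, 0 ≤ bl j i ∧ bl j i ≤ c)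
    {T : ℕ} (hT : 0 < T) {t : ℝ} (ht : 0 < t) :
    μ {ω | t ≤ |(∑ i ∈ Finset.range T, bl (Y i ω) i) -
        ∑ i ∈ Finset.range T, ∑ j, p i j * bl j i|} ≤
      ENNReal.ofReal (2 * Real.exp (-t ^ 2 / (2 * T * c ^ 2))) := by
  classical
  set e : ℕ → ℝ := fun i => ∑ j, p i j * bl j i with he
  set Z : ℕ → Ω → ℝ := fun i ω => bl (Y i ω) i - e i with hZ
  have hZmeas : ∀ i, Measurable (Z i) := fun i =>
    ((measurable_of_countable (fun j => bl j i)).comp (hY i)).sub measurable_const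
  have hZindep : iIndepFun (m := fun _ : ℕ => (inferInstance : MeasurableSpace ℝ)) Z μ :=
    hind.comp (fun i j => bl j i - e i) (fun i => measurable_of_countable _)
  have he_bd : ∀ i, 0 ≤ e i ∧ e i ≤ c := by
    intro i
    constructor
    · exact Finset.sum_nonneg fun j _ => mul_nonneg (hp i j) (hbl j i).1
    · calc e i ≤ ∑ j, p i j * c :=
            Finset.sum_le_sum fun j _ => mul_le_mul_of_nonneg_left (hbl j i).2 (hp i j)
        _ = c := by rw [← Finset.sum_mul, hps i, one_mul]
  have hZbdd : ∀ i ω, |Z i ω| ≤ c := by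
    intro i ω
    have h1 := (hbl (Y i ω) i).1
    have h2 := (hbl (Y i ω) i).2
    have h3 := (he_bd i).1
    have h4 := (he_bd i).2
    rw [hZ, abs_le]
    constructor <;> simp <;> nlinarith
  have hmgf : ∀ s : ℝ, ∀ i, mgf (Z i) μ s ≤ Real.exp (s ^ 2 * c ^ 2 / 2) := by
    intro s i
    have h1 : mgf (Z i) μ s = ∑ j, p i j * Real.exp (s * (bl j i - e i)) := by
      rw [mgf]
      exact integral_comp_fintype μ (hY i)
        (fun j => Real.exp (s * (bl j i - e i))) (hp i) (hd i)
    have h2 : ∑ j, p i j * Real.exp (s * (bl j i - e i)) =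
        Real.exp (-(s * e i)) * ∑ j, p i j * Real.exp (s * bl j i) := by
      rw [Finset.mul_sum]
      refine Finset.sum_congr rfl fun j _ => ?_
      rw [mul_sub, Real.exp_sub, Real.exp_neg]
      ring
    have h3 := sum_weight_exp_le (p := p i) (g := fun j => bl j i) hc.le
      (hp i) (hps i) (fun j => (hbl j i).1) (fun j => (hbl j i).2) s
    rw [h1, h2]
    calc Real.exp (-(s * e i)) * ∑ j, p i j * Real.exp (s * bl j i)
        ≤ Real.exp (-(s * e i)) * Real.exp (s * (∑ j, p i j * bl j i) + s ^ 2 * c ^ 2 / 2) :=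
          mul_le_mul_of_nonneg_left h3 (Real.exp_nonneg _)
      _ = Real.exp (s ^ 2 * c ^ 2 / 2) := by
          rw [← Real.exp_add]
          have hee : ∑ j, p i j * bl j i = e i := rfl
          rw [hee]
          congr 1
          ring
  have hVfun : (fun ω => ∑ i ∈ Finset.range T, Z i ω) = ∑ i ∈ Finset.range T, Z i := by
    funext ω
    rw [Finset.sum_apply]
  have hVmeas : Measurable (fun ω => ∑ i ∈ Finset.range T, Z i ω) :=
    Finset.measurable_sum _ fun i _ => hZmeas i
  have hVint : ∀ s : ℝ, Integrable (fun ω => Real.exp (s * ∑ i ∈ Finset.range T, Z i ω)) μ := by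
    intro s
    refine Integrable.mono' (integrable_const (Real.exp (|s| * (T * c))))
      ((measurable_const.mul hVmeas).exp.aestronglyMeasurable)
      (Filter.Eventually.of_forall fun ω => ?_)
    rw [Real.norm_eq_abs, abs_of_pos (Real.exp_pos _), Real.exp_le_exp]
    have h1 : |∑ i ∈ Finset.range T, Z i ω| ≤ T * c := by
      refine (Finset.abs_sum_le_sum_abs _ _).trans ?_
      calc ∑ i ∈ Finset.range T, |Z i ω| ≤ ∑ _i ∈ Finset.range T, c :=
            Finset.sum_le_sum fun i _ => hZbdd i ω
        _ = T * c := by rw [Finset.sum_const, Finset.card_range, nsmul_eq_mul]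
    calc s * ∑ i ∈ Finset.range T, Z i ω ≤ |s * ∑ i ∈ Finset.range T, Z i ω| := le_abs_self _
      _ = |s| * |∑ i ∈ Finset.range T, Z i ω| := abs_mul _ _
      _ ≤ |s| * (T * c) := mul_le_mul_of_nonneg_left h1 (abs_nonneg s)
  have hmgfV : ∀ s : ℝ, mgf (fun ω => ∑ i ∈ Finset.range T, Z i ω) μ s ≤
      Real.exp (T * (s ^ 2 * c ^ 2 / 2)) := by
    intro s
    rw [hVfun, hZindep.mgf_sum hZmeas (Finset.range T)]
    calc ∏ i ∈ Finset.range T, mgf (Z i) μ s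
        ≤ ∏ _i ∈ Finset.range T, Real.exp (s ^ 2 * c ^ 2 / 2) :=
          Finset.prod_le_prod (fun i _ => mgf_nonneg) (fun i _ => hmgf s i)
      _ = Real.exp (T * (s ^ 2 * c ^ 2 / 2)) := by
          rw [Finset.prod_const, Finset.card_range, ← Real.exp_nat_mul]
  set s : ℝ := t / (T * c ^ 2) with hs
  have hTpos : (0 : ℝ) < (T : ℝ) := by exact_mod_cast hT
  have hspos : 0 < s := by
    rw [hs]; positivity
  have harith : -s * t + T * (s ^ 2 * c ^ 2 / 2) = -t ^ 2 / (2 * T * c ^ 2) := by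
    rw [hs]
    field_simp
    ring
  have hup : (μ {ω | t ≤ (∑ i ∈ Finset.range T, Z i ω)}).toReal ≤
      Real.exp (-t ^ 2 / (2 * T * c ^ 2)) := by
    have h := measure_ge_le_exp_mul_mgf (μ := μ)
      (X := fun ω => ∑ i ∈ Finset.range T, Z i ω) (t := s) t hspos.le (hVint s)
    refine h.trans ?_
    calc Real.exp (-s * t) * mgf (fun ω => ∑ i ∈ Finset.range T, Z i ω) μ s
        ≤ Real.exp (-s * t) * Real.exp (T * (s ^ 2 * c ^ 2 / 2)) :=
          mul_le_mul_of_nonneg_left (hmgfV s) (Real.exp_nonneg _)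
      _ = Real.exp (-t ^ 2 / (2 * T * c ^ 2)) := by rw [← Real.exp_add, harith]
  have hlo : (μ {ω | (∑ i ∈ Finset.range T, Z i ω) ≤ -t}).toReal ≤
      Real.exp (-t ^ 2 / (2 * T * c ^ 2)) := by
    have h := measure_le_le_exp_mul_mgf (μ := μ)
      (X := fun ω => ∑ i ∈ Finset.range T, Z i ω) (t := -s) (-t)
      (neg_nonpos.mpr hspos.le) (hVint (-s))
    refine h.trans ?_
    calc Real.exp (-(-s) * -t) * mgf (fun ω => ∑ i ∈ Finset.range T, Z i ω) μ (-s)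
        ≤ Real.exp (-(-s) * -t) * Real.exp (T * ((-s) ^ 2 * c ^ 2 / 2)) :=
          mul_le_mul_of_nonneg_left (hmgfV (-s)) (Real.exp_nonneg _)
      _ = Real.exp (-t ^ 2 / (2 * T * c ^ 2)) := by
          rw [← Real.exp_add, ← harith]
          congr 1
          ring
  have hset : {ω | t ≤ |(∑ i ∈ Finset.range T, bl (Y i ω) i) -
      ∑ i ∈ Finset.range T, ∑ j, p i j * bl j i|} ⊆
      {ω | t ≤ (∑ i ∈ Finset.range T, Z i ω)} ∪
      {ω | (∑ i ∈ Finset.range T, Z i ω) ≤ -t} := by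
    intro ω hω
    simp only [Set.mem_setOf_eq] at hω
    have hVeq : (∑ i ∈ Finset.range T, bl (Y i ω) i) -
        (∑ i ∈ Finset.range T, ∑ j, p i j * bl j i) = ∑ i ∈ Finset.range T, Z i ω := by
      rw [hZ, ← Finset.sum_sub_distrib]
    rw [hVeq] at hω
    rcases le_abs.mp hω with h | h
    · exact Or.inl h
    · exact Or.inr (by simp only [Set.mem_setOf_eq]; linarith)
  calc μ {ω | t ≤ |(∑ i ∈ Finset.range T, bl (Y i ω) i) -
        ∑ i ∈ Finset.range T, ∑ j, p i j * bl j i|}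
      ≤ μ ({ω | t ≤ (∑ i ∈ Finset.range T, Z i ω)} ∪
          {ω | (∑ i ∈ Finset.range T, Z i ω) ≤ -t}) := measure_mono hset
    _ ≤ μ {ω | t ≤ (∑ i ∈ Finset.range T, Z i ω)} +
        μ {ω | (∑ i ∈ Finset.range T, Z i ω) ≤ -t} := measure_union_le _ _
    _ ≤ ENNReal.ofReal (Real.exp (-t ^ 2 / (2 * T * c ^ 2))) +
        ENNReal.ofReal (Real.exp (-t ^ 2 / (2 * T * c ^ 2))) := by
        gcongr
        · rw [← ENNReal.ofReal_toReal (measure_ne_top μ _)]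
          exact ENNReal.ofReal_le_ofReal hup
        · rw [← ENNReal.ofReal_toReal (measure_ne_top μ _)]
          exact ENNReal.ofReal_le_ofReal hlo
    _ = ENNReal.ofReal (2 * Real.exp (-t ^ 2 / (2 * T * c ^ 2))) := by
        rw [← ENNReal.ofReal_add (Real.exp_nonneg _) (Real.exp_nonneg _)]
        congr 1
        ring

private lemma indep_restrict {Ω : Type*} [MeasurableSpace Ω] {μ : Measure Ω} {lam : ℕ}
    {sel : Ω → ℕ → ℕ → Fin lam}
    (hindep : ProbabilityTheory.iIndepFun
      (m := fun _ : ℕ × ℕ => (inferInstance : MeasurableSpace (Fin lam)))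
      (fun p : ℕ × ℕ => fun ω => sel ω p.1 p.2) μ) (n : ℕ) :
    ProbabilityTheory.iIndepFun (m := fun _ : ℕ => (inferInstance : MeasurableSpace (Fin lam)))
      (fun i : ℕ => fun ω => sel ω n i) μ := by
  rw [ProbabilityTheory.iIndepFun_iff_measure_inter_preimage_eq_mul] at hindep ⊢
  intro S sets hsets
  have hmeas' : ∀ q : ℕ × ℕ, q ∈ S.image (fun i => (n, i)) →
      MeasurableSet[(inferInstance : MeasurableSpace (Fin lam))] (sets q.2) := by
    intro q _
    exact MeasurableSpace.measurableSet_top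
  have h := hindep (S.image fun i => (n, i)) (sets := fun q => sets q.2) hmeas'
  have hinj : ∀ a ∈ S, ∀ b ∈ S, (n, a) = (n, b) → a = b := by
    intro a _ b _ hab
    exact (Prod.mk.injEq _ _ _ _ ▸ hab).2
  have hset : (⋂ q ∈ S.image (fun i => (n, i)),
      (fun ω => sel ω q.1 q.2) ⁻¹' sets q.2) =
      ⋂ i ∈ S, (fun ω => sel ω n i) ⁻¹' sets i := by
    ext ω
    simp only [Set.mem_iInter, Finset.mem_image]
    constructor
    · intro h i hi
      exact h (n, i) ⟨i, hi, rfl⟩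
    · rintro h q ⟨i, hi, rfl⟩
      exact h i hi
  rw [hset, Finset.prod_image hinj] at h
  exact h

end AuxProof3
section AuxProof4

open Finset ProbabilityTheory

private lemma Kq_eq {n r : ℕ} (hr : 0 < r) (hn : 0 < n) : Kq n r = (n - 1) / r := by
  rw [Kq]
  have h1 : n + r - 1 = (n - 1) + r := by omega
  rw [h1, Nat.add_div_right _ hr]
  simp

private lemma Kq_mul_le (n r : ℕ) (hr : 0 < r) : Kq n r * r ≤ n := by
  rcases Nat.eq_zero_or_pos n with h | h
  · subst h
    rw [Kq]
    have : (0 + r - 1) / r = 0 := Nat.div_eq_of_lt (by omega)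
    rw [this]
    omega
  · rw [Kq_eq hr h]
    calc (n - 1) / r * r ≤ n - 1 := Nat.div_mul_le_self _ _
      _ ≤ n := by omega

private lemma Kq_pos {n r : ℕ} (hr : 0 < r) (hn : r + 1 ≤ n) : 0 < Kq n r := by
  rw [Kq_eq hr (by omega)]
  exact Nat.div_pos (by omega) hr

private lemma master_limit {f : ℕ → ℝ} (hf : ∀ n, 1 ≤ f n)
    (hsmall : f =o[Filter.atTop] fun n : ℕ => (n : ℝ) ^ ((1 : ℝ) / 3)) :
    Filter.Tendsto (fun n => f n ^ 2 / (n : ℝ)) Filter.atTop (nhds 0) := by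
  have h := hsmall.tendsto_div_nhds_zero
  have h2 : Filter.Tendsto (fun n => (f n / (n : ℝ) ^ ((1 : ℝ) / 3)) ^ 2)
      Filter.atTop (nhds 0) := by
    have := h.mul h
    rw [mul_zero] at this
    simpa [pow_two] using this
  refine squeeze_zero' (Filter.Eventually.of_forall fun n => by positivity)
    ?_ h2
  filter_upwards [Filter.eventually_ge_atTop 1] with n hn
  have hn1 : (1 : ℝ) ≤ (n : ℝ) := by exact_mod_cast hn
  have e1 : ((n : ℝ) ^ ((1 : ℝ) / 3)) ^ 2 = (n : ℝ) ^ ((2 : ℝ) / 3) := by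
    rw [← Real.rpow_natCast ((n : ℝ) ^ ((1 : ℝ) / 3)) 2,
      ← Real.rpow_mul (by positivity)]
    norm_num
  rw [div_pow, e1]
  have hle : (n : ℝ) ^ ((2 : ℝ) / 3) ≤ (n : ℝ) := by
    calc (n : ℝ) ^ ((2 : ℝ) / 3) ≤ (n : ℝ) ^ (1 : ℝ) :=
          Real.rpow_le_rpow_of_exponent_le hn1 (by norm_num)
      _ = (n : ℝ) := Real.rpow_one _
  have hpos : (0 : ℝ) < (n : ℝ) ^ ((2 : ℝ) / 3) := Real.rpow_pos_of_pos (by linarith) _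
  exact div_le_div_of_nonneg_left (by positivity) hpos hle

private lemma eta_arith {L lmax rn nn K : ℝ} (hL : 0 < L) (hlmax : 0 < lmax)
    (hrn : 1 ≤ rn) (hnn : 0 ≤ nn) (hK : 0 ≤ K) (hKrn : K * rn ≤ nn) :
    L + (K * K) * ((2 * Real.sqrt (2 * L) / (rn * lmax * (nn + rn))) ^ 2 *
        (rn ^ 2 * lmax) ^ 2 / 2) ≤
      (2 * Real.sqrt (2 * L) / (rn * lmax * (nn + rn))) *
        (Real.sqrt (2 * L) * lmax * (rn * (nn + rn) + nn * rn ^ 2)) := by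
  have hs2sq : Real.sqrt (2 * L) ^ 2 = 2 * L := Real.sq_sqrt (by linarith)
  have hs2pos : 0 < Real.sqrt (2 * L) := Real.sqrt_pos.2 (by linarith)
  set s2 := Real.sqrt (2 * L) with hs2
  have hQ : 0 < rn * lmax * (nn + rn) := by positivity
  have h1 : (K * rn) * (K * rn) ≤ nn * nn :=
    mul_self_le_mul_self (by positivity) hKrn
  have h2 : nn ≤ rn * (nn + rn) := by nlinarith
  set Q : ℝ := rn * lmax * (nn + rn) with hQdef
  set X : ℝ := rn * (nn + rn) + nn * rn ^ 2 with hXdef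
  have heq2 : (2 * s2 / Q) * (s2 * lmax * X) = 4 * L * (lmax * X) / Q := by
    rw [div_mul_eq_mul_div]
    congr 1
    have h3 : 2 * s2 * (s2 * lmax * X) = 2 * s2 ^ 2 * (lmax * X) := by ring
    rw [h3, hs2sq]
    ring
  have heq1 : L + (K * K) * ((2 * s2 / Q) ^ 2 * (rn ^ 2 * lmax) ^ 2 / 2) =
      L + (2 * s2 ^ 2 * (K * K * (rn ^ 2 * lmax) ^ 2)) / Q ^ 2 := by
    rw [div_pow]
    ring
  rw [heq2, heq1, hs2sq]
  rw [← sub_nonneg]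
  have heq3 : 4 * L * (lmax * X) / Q - (L + 2 * (2 * L) * (K * K * (rn ^ 2 * lmax) ^ 2) / Q ^ 2) =
      (4 * L * (lmax * X) * Q - L * Q ^ 2 - 4 * L * (K * K * (rn ^ 2 * lmax) ^ 2)) / Q ^ 2 := by
    field_simp
    ring
  rw [heq3]
  apply div_nonneg _ (by positivity)
  rw [hQdef, hXdef]
  nlinarith [mul_le_mul_of_nonneg_left h1
      (show (0 : ℝ) ≤ 4 * L * lmax ^ 2 * rn ^ 2 by positivity),
    mul_le_mul_of_nonneg_left h2
      (show (0 : ℝ) ≤ 4 * L * lmax ^ 2 * nn * rn ^ 2 by positivity),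
    mul_nonneg (mul_nonneg (mul_nonneg (by linarith : (0:ℝ) ≤ 3 * L) (sq_nonneg lmax))
      (sq_nonneg rn)) (sq_nonneg (nn + rn))]

private lemma main_assembly {lam : ℕ} (hlam : 0 < lam)
    {Ω : Type*} [MeasurableSpace Ω] {μ : MeasureTheory.Measure Ω}
    [MeasureTheory.IsProbabilityMeasure μ]
    {sel : Ω → ℕ → ℕ → Fin lam} (hmeas : ∀ n i, Measurable fun ω => sel ω n i)
    (hindep : ∀ n, ProbabilityTheory.iIndepFun
        (m := fun _ : ℕ => (inferInstance : MeasurableSpace (Fin lam)))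
        (fun i : ℕ => fun ω => sel ω n i) μ)
    (bl : ℕ → Fin lam → ℕ → ℝ) (T : ℕ → ℕ) (η : ℕ → ℝ) (c : ℕ → ℝ)
    (hdist : ∀ n i j, μ {ω | sel ω n i = j} = ENNReal.ofReal (expWeight (η n) (bl n) i j))
    (hblb : ∀ n j i, 0 ≤ bl n j i ∧ bl n j i ≤ c n) (hc : ∀ n, 0 < c n)
    (H : (Finset.univ : Finset (Fin lam)).Nonempty)
    (D G : ℕ → ℝ)
    (hdet : ∀ n, |ewExpectedLoss (η n) (bl n) (T n) -
        Finset.univ.inf' H (fun j => cumBlockLoss (bl n) j (T n))| ≤ D n)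
    (hD : Filter.Tendsto (fun n => D n / (n : ℝ) ^ 2) Filter.atTop (nhds 0))
    (hTc : ∀ n, (T n : ℝ) * c n ^ 2 ≤ (n : ℝ) ^ 2 * G n)
    (hG : Filter.Tendsto (fun n => G n / (n : ℝ)) Filter.atTop (nhds 0))
    (hT : ∀ᶠ n in Filter.atTop, 0 < T n) :
    ∀ᵐ ω ∂μ, Filter.Tendsto (fun n =>
      (ewRealizedLoss (bl n) (T n) (sel ω n) -
        Finset.univ.inf' H (fun j => cumBlockLoss (bl n) j (T n))) / (n : ℝ) ^ 2)
      Filter.atTop (nhds 0) := by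
  classical
  haveI : Nonempty (Fin lam) := ⟨⟨0, hlam⟩⟩
  set E : ℕ → ℝ := fun n => ewExpectedLoss (η n) (bl n) (T n) with hE
  set A : ℕ → ℕ → Set Ω := fun q n =>
    {ω | (n : ℝ) ^ 2 / ((q : ℝ) + 1) ≤
      |ewRealizedLoss (bl n) (T n) (sel ω n) - E n|} with hA
  have hbound : ∀ q : ℕ, ∀ᶠ n in Filter.atTop,
      μ (A q n) ≤ ENNReal.ofReal (2 * Real.exp (-(n : ℝ))) := by
    intro q
    have hδ : (0 : ℝ) < 1 / (2 * ((q : ℝ) + 1) ^ 2) := by positivity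
    have h0 : ∀ᶠ n in Filter.atTop, G n / (n : ℝ) < 1 / (2 * ((q : ℝ) + 1) ^ 2) :=
      hG.eventually_lt_const hδ
    filter_upwards [h0, Filter.eventually_ge_atTop 1, hT] with n hGn hn1 hTn
    have hn1' : (1 : ℝ) ≤ (n : ℝ) := by exact_mod_cast hn1
    have hn0 : (0 : ℝ) < (n : ℝ) := by linarith
    have htpos : 0 < (n : ℝ) ^ 2 / ((q : ℝ) + 1) :=
      div_pos (pow_pos hn0 2) (by positivity)
    have hcon := concentration (J := Fin lam) μ (fun i => hmeas n i) (hindep n)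
      (fun i j => expWeight_nonneg _ _ i j) (fun i j => hdist n i j)
      (fun i => sum_expWeight _ _ i) (hc n) (hblb n) hTn htpos
    have hset : A q n = {ω | (n : ℝ) ^ 2 / ((q : ℝ) + 1) ≤
        |(∑ i ∈ Finset.range (T n), bl n (sel ω n i) i) -
          ∑ i ∈ Finset.range (T n), ∑ j, expWeight (η n) (bl n) i j * bl n j i|} := rfl
    rw [hset]
    refine hcon.trans (ENNReal.ofReal_le_ofReal ?_)
    have hTpos' : (0 : ℝ) < (T n : ℝ) := by exact_mod_cast hTn
    have h2q : 2 * ((q : ℝ) + 1) ^ 2 * G n ≤ (n : ℝ) := by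
      have h3 := (div_lt_iff₀ hn0).1 hGn
      have h4 : 2 * ((q : ℝ) + 1) ^ 2 * G n <
          2 * ((q : ℝ) + 1) ^ 2 * (1 / (2 * ((q : ℝ) + 1) ^ 2) * (n : ℝ)) := by
        have hp : (0 : ℝ) < 2 * ((q : ℝ) + 1) ^ 2 := by positivity
        exact mul_lt_mul_of_pos_left h3 hp
      have h5 : 2 * ((q : ℝ) + 1) ^ 2 * (1 / (2 * ((q : ℝ) + 1) ^ 2) * (n : ℝ)) = (n : ℝ) := by
        field_simp
      linarith
    have key : (n : ℝ) ≤ ((n : ℝ) ^ 2 / ((q : ℝ) + 1)) ^ 2 / (2 * (T n) * (c n) ^ 2) := by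
      have h2T : (0 : ℝ) < 2 * (T n) * (c n) ^ 2 :=
        mul_pos (mul_pos two_pos hTpos') (pow_pos (hc n) 2)
      rw [le_div_iff₀ h2T, div_pow, le_div_iff₀ (by positivity : (0:ℝ) < ((q : ℝ) + 1) ^ 2)]
      have hG0 : 0 ≤ G n := by
        nlinarith [hTc n, mul_pos hTpos' (pow_pos (hc n) 2), pow_pos hn0 2]
      calc (n : ℝ) * (2 * (T n) * (c n) ^ 2) * ((q : ℝ) + 1) ^ 2
          ≤ (n : ℝ) * (2 * ((n : ℝ) ^ 2 * G n)) * ((q : ℝ) + 1) ^ 2 := by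
            have h6 := mul_le_mul_of_nonneg_left (hTc n)
              (show (0:ℝ) ≤ 2 * (n:ℝ) * ((q:ℝ)+1)^2 by positivity)
            nlinarith [h6]
        _ = ((n : ℝ) * (n : ℝ) ^ 2) * (2 * ((q : ℝ) + 1) ^ 2 * G n) := by ring
        _ ≤ ((n : ℝ) * (n : ℝ) ^ 2) * (n : ℝ) := by
            refine mul_le_mul_of_nonneg_left h2q (by positivity)
        _ = ((n : ℝ) ^ 2) ^ 2 := by ring
    have hexp : -((n : ℝ) ^ 2 / ((q : ℝ) + 1)) ^ 2 / (2 * (T n) * (c n) ^ 2) ≤ -(n : ℝ) := by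
      rw [neg_div]
      exact neg_le_neg key
    have := Real.exp_le_exp.2 hexp
    nlinarith [this]
  choose N hN using fun q => Filter.eventually_atTop.1 (hbound q)
  have hBC : ∀ q : ℕ, ∀ᵐ ω ∂μ, ∀ᶠ i in Filter.atTop, ω ∉ A q (i + N q) := by
    intro q
    apply MeasureTheory.ae_eventually_notMem
    have hle : ∀ i : ℕ, μ (A q (i + N q)) ≤ ENNReal.ofReal (2 * Real.exp (-(i : ℝ))) := by
      intro i
      refine (hN q (i + N q) (by omega)).trans (ENNReal.ofReal_le_ofReal ?_)
      have harg : (-(((i + N q : ℕ) : ℝ))) ≤ -(i : ℝ) := by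
        push_cast
        linarith [Nat.cast_nonneg (α := ℝ) (N q)]
      have := Real.exp_le_exp.2 harg
      linarith
    refine ne_top_of_le_ne_top ?_ (ENNReal.tsum_le_tsum hle)
    rw [← ENNReal.ofReal_tsum_of_nonneg (fun i => by positivity)
      ((Real.summable_exp_neg_nat).mul_left 2)]
    exact ENNReal.ofReal_ne_top
  have hae := (MeasureTheory.ae_all_iff).2 hBC
  filter_upwards [hae] with ω hω
  rw [Metric.tendsto_atTop]
  intro ε hε
  obtain ⟨q, hq⟩ := exists_nat_one_div_lt (show (0 : ℝ) < ε / 2 by linarith)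
  obtain ⟨i₀, hi₀⟩ := Filter.eventually_atTop.1 (hω q)
  obtain ⟨N₁, hN₁⟩ := Filter.eventually_atTop.1
    (hD.eventually_lt_const (show (0 : ℝ) < ε / 2 by linarith))
  refine ⟨max (N q + i₀) (max N₁ 1), fun n hn => ?_⟩
  have ha : N q + i₀ ≤ n := le_trans (le_max_left _ _) hn
  have hb : N₁ ≤ n := le_trans ((le_max_left _ _).trans (le_max_right _ _)) hn
  have hc1 : 1 ≤ n := le_trans ((le_max_right _ _).trans (le_max_right _ _)) hn
  have hnot : ω ∉ A q n := by
    have h1 := hi₀ (n - N q) (by omega)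
    rwa [Nat.sub_add_cancel (by omega)] at h1
  simp only [hA, Set.mem_setOf_eq, not_le] at hnot
  have hdetn := hdet n
  have hn1' : (1 : ℝ) ≤ (n : ℝ) := by exact_mod_cast hc1
  have hn2 : (0 : ℝ) < (n : ℝ) ^ 2 := by positivity
  rw [Real.dist_eq, sub_zero, abs_div, abs_of_pos hn2]
  have h3 : |ewRealizedLoss (bl n) (T n) (sel ω n) -
      Finset.univ.inf' H (fun j => cumBlockLoss (bl n) j (T n))| ≤
      |ewRealizedLoss (bl n) (T n) (sel ω n) - E n| +
      |E n - Finset.univ.inf' H (fun j => cumBlockLoss (bl n) j (T n))| :=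
    abs_sub_le _ _ _
  have h4 : |ewRealizedLoss (bl n) (T n) (sel ω n) -
      Finset.univ.inf' H (fun j => cumBlockLoss (bl n) j (T n))| <
      (n : ℝ) ^ 2 / ((q : ℝ) + 1) + D n := by
    have := hdetn
    rw [show ewExpectedLoss (η n) (bl n) (T n) = E n from rfl] at this
    linarith
  have h5 : D n / (n : ℝ) ^ 2 < ε / 2 := hN₁ n hb
  calc |ewRealizedLoss (bl n) (T n) (sel ω n) -
        Finset.univ.inf' H (fun j => cumBlockLoss (bl n) j (T n))| / (n : ℝ) ^ 2
      < ((n : ℝ) ^ 2 / ((q : ℝ) + 1) + D n) / (n : ℝ) ^ 2 := by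
        exact (div_lt_div_iff_of_pos_right hn2).2 h4
    _ = 1 / ((q : ℝ) + 1) + D n / (n : ℝ) ^ 2 := by
        rw [add_div]
        congr 1
        field_simp
    _ < ε / 2 + ε / 2 := add_lt_add hq h5
    _ = ε := by ring

end AuxProof4
section AuxProof5

open Finset ProbabilityTheory

private lemma blockLoss_bounds {A D : Type*} [Nonempty A] {lmax : ℝ} {l : A → D → ℝ}
    (hl : ∀ a d, 0 ≤ l a d ∧ l a d ≤ lmax) {lam : ℕ} (n k : ℕ)
    (Sf : Fin lam → Scandictor A D (Fin k × Fin k)) (y : Fin n × Fin n → A)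
    (j : Fin lam) (a : ℕ) :
    0 ≤ blockLoss l n k Sf y j a ∧ blockLoss l n k Sf y j a ≤ ((k : ℝ)) ^ 2 * lmax := by
  have hcard : ((Fintype.card (Fin k × Fin k) : ℕ) : ℝ) = (k : ℝ) ^ 2 := by
    rw [Fintype.card_prod, Fintype.card_fin]
    push_cast
    ring
  unfold blockLoss sLoss cumLoss
  constructor
  · exact Finset.sum_nonneg fun t _ => (hl _ _).1
  · refine le_trans (Finset.sum_le_sum (fun t _ => (hl _ _).2)) ?_
    rw [Finset.sum_const, Finset.card_univ, Fintype.card_fin, nsmul_eq_mul, hcard]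

end AuxProof5
/-- Blocks have side `m n + 1` (so that the block size is positive and
tends to infinity, is monotone, and is `o(n^{1/3})`).  For each `n` the block
exponential-weighting algorithm is run, with expert set `S (m n)` of `lam` scandictors for
the `(m n + 1) × (m n + 1)` square, on the restriction of the infinite individual array `x`
to `V_n`.  On any probability space carrying the algorithm's selections — independent
across all runs and blocks, block `i` of run `n` selecting expert `j` with the
exponential-weighting probability — the normalized regret tends to `0` almost surely. -/
theorem statement4 {A D : Type*} [Nonempty A]
    (lmax : ℝ) (l : A → D → ℝ) (hl : ∀ a d, 0 ≤ l a d ∧ l a d ≤ lmax)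
    (lam : ℕ) (hlam : 0 < lam)
    (m : ℕ → ℕ) (hmono : Monotone m) (hminf : Filter.Tendsto m atTop atTop)
    (hsmall : (fun n => ((m n : ℝ) + 1)) =o[atTop] fun n => (n : ℝ) ^ ((1 : ℝ) / 3))
    (S : (k : ℕ) → Fin lam → Scandictor A D (Fin (k + 1) × Fin (k + 1)))
    (x : ℤ × ℤ → A)
    (Ω : Type*) [MeasurableSpace Ω] (μ : Measure Ω) [IsProbabilityMeasure μ]
    (sel : Ω → ℕ → ℕ → Fin lam)
    (hmeas : ∀ n i, Measurable fun ω => sel ω n i)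
    (hindep : ProbabilityTheory.iIndepFun
      (m := fun _ : ℕ × ℕ => (inferInstance : MeasurableSpace (Fin lam)))
      (fun p : ℕ × ℕ => fun ω => sel ω p.1 p.2) μ)
    (hdist : ∀ n i j,
      μ {ω | sel ω n i = j} =
        ENNReal.ofReal
          (expWeight (ewEta n (m n + 1) lmax lam)
            (blockLoss l n (m n + 1) (S (m n)) (restrV n x)) i j)) :
    ∀ᵐ ω ∂μ, Filter.Tendsto
      (fun n =>
        ((boundaryLoss n (m n + 1) lmax +
            ewRealizedLoss (blockLoss l n (m n + 1) (S (m n)) (restrV n x))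
              (Kq n (m n + 1) * Kq n (m n + 1)) (sel ω n))
          - Finset.univ.inf' ⟨⟨0, hlam⟩, Finset.mem_univ _⟩
              (fun j => boundaryLoss n (m n + 1) lmax +
                cumBlockLoss (blockLoss l n (m n + 1) (S (m n)) (restrV n x)) j
                  (Kq n (m n + 1) * Kq n (m n + 1)))) / (n : ℝ) ^ 2)
      atTop (nhds 0) := by
  classical
  obtain ⟨a0⟩ := ‹Nonempty A›
  obtain ⟨d0⟩ : Nonempty D := ⟨(S 0 ⟨0, hlam⟩).pred 0 (fun i => i.elim0)⟩
  have hlmax0 : 0 ≤ lmax := (hl a0 d0).1.trans (hl a0 d0).2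
  have hsimp : ∀ (ω : Ω) (n : ℕ),
      (boundaryLoss n (m n + 1) lmax +
          ewRealizedLoss (blockLoss l n (m n + 1) (S (m n)) (restrV n x))
            (Kq n (m n + 1) * Kq n (m n + 1)) (sel ω n)
        - Finset.univ.inf' ⟨⟨0, hlam⟩, Finset.mem_univ _⟩
            (fun j => boundaryLoss n (m n + 1) lmax +
              cumBlockLoss (blockLoss l n (m n + 1) (S (m n)) (restrV n x)) j
                (Kq n (m n + 1) * Kq n (m n + 1))))
      = ewRealizedLoss (blockLoss l n (m n + 1) (S (m n)) (restrV n x))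
          (Kq n (m n + 1) * Kq n (m n + 1)) (sel ω n)
        - Finset.univ.inf' ⟨⟨0, hlam⟩, Finset.mem_univ _⟩
            (fun j => cumBlockLoss (blockLoss l n (m n + 1) (S (m n)) (restrV n x)) j
              (Kq n (m n + 1) * Kq n (m n + 1))) := by
    intro ω n
    erw [inf'_const_add]
    ring
  simp only [hsimp]
  rcases eq_or_lt_of_le hlmax0 with hzero | hlmaxpos
  · -- degenerate case: lmax = 0, all losses vanish
    have hbl0 : ∀ n (j : Fin lam) i,
        blockLoss l n (m n + 1) (S (m n)) (restrV n x) j i = 0 := by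
      intro n j i
      unfold blockLoss sLoss cumLoss
      refine Finset.sum_eq_zero fun t _ => ?_
      exact le_antisymm ((hl _ _).2.trans hzero.ge) (hl _ _).1
    refine MeasureTheory.ae_of_all _ fun ω => ?_
    have hzf : (fun n : ℕ =>
        (ewRealizedLoss (blockLoss l n (m n + 1) (S (m n)) (restrV n x))
            (Kq n (m n + 1) * Kq n (m n + 1)) (sel ω n)
          - Finset.univ.inf' ⟨⟨0, hlam⟩, Finset.mem_univ _⟩
              (fun j => cumBlockLoss (blockLoss l n (m n + 1) (S (m n)) (restrV n x)) j
                (Kq n (m n + 1) * Kq n (m n + 1)))) / (n : ℝ) ^ 2) = fun _ => (0 : ℝ) := by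
      funext n
      erw [show ewRealizedLoss (blockLoss l n (m n + 1) (S (m n)) (restrV n x))
            (Kq n (m n + 1) * Kq n (m n + 1)) (sel ω n) = 0 from
          Finset.sum_eq_zero fun i _ => hbl0 n _ i,
        show (fun j : Fin lam =>
            cumBlockLoss (blockLoss l n (m n + 1) (S (m n)) (restrV n x)) j
              (Kq n (m n + 1) * Kq n (m n + 1))) = fun _ => (0 : ℝ) from
          funext fun j => Finset.sum_eq_zero fun a _ => hbl0 n j a,
        Finset.inf'_const]
      simp
    rw [hzf]
    exact tendsto_const_nhds
  rcases Nat.lt_or_ge lam 2 with hlt | hge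
  · -- degenerate case: lam = 1, single expert
    have hlam1 : lam = 1 := by omega
    subst hlam1
    refine MeasureTheory.ae_of_all _ fun ω => ?_
    have hzf : (fun n : ℕ =>
        (ewRealizedLoss (blockLoss l n (m n + 1) (S (m n)) (restrV n x))
            (Kq n (m n + 1) * Kq n (m n + 1)) (sel ω n)
          - Finset.univ.inf' ⟨⟨0, hlam⟩, Finset.mem_univ _⟩
              (fun j => cumBlockLoss (blockLoss l n (m n + 1) (S (m n)) (restrV n x)) j
                (Kq n (m n + 1) * Kq n (m n + 1)))) / (n : ℝ) ^ 2) = fun _ => (0 : ℝ) := by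
      funext n
      have hfc : (fun j : Fin 1 =>
          cumBlockLoss (blockLoss l n (m n + 1) (S (m n)) (restrV n x)) j
            (Kq n (m n + 1) * Kq n (m n + 1))) = fun _ : Fin 1 =>
          cumBlockLoss (blockLoss l n (m n + 1) (S (m n)) (restrV n x)) ⟨0, hlam⟩
            (Kq n (m n + 1) * Kq n (m n + 1)) :=
        funext fun j => by rw [Subsingleton.elim j ⟨0, hlam⟩]
      erw [hfc, Finset.inf'_const,
        show ewRealizedLoss (blockLoss l n (m n + 1) (S (m n)) (restrV n x))
            (Kq n (m n + 1) * Kq n (m n + 1)) (sel ω n) =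
          cumBlockLoss (blockLoss l n (m n + 1) (S (m n)) (restrV n x)) ⟨0, hlam⟩
            (Kq n (m n + 1) * Kq n (m n + 1)) from
          Finset.sum_congr rfl fun i _ => by rw [Subsingleton.elim (sel ω n i) ⟨0, hlam⟩]]
      simp
    rw [hzf]
    exact tendsto_const_nhds
  -- main case: lmax > 0, lam ≥ 2
  have hlam1R : (1 : ℝ) < (lam : ℝ) := by exact_mod_cast (by omega : 1 < lam)
  have hL : (0 : ℝ) < Real.log lam := Real.log_pos hlam1R
  haveI : Nonempty (Fin lam) := ⟨⟨0, hlam⟩⟩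
  have hmaster : Filter.Tendsto (fun n => ((m n : ℝ) + 1) ^ 2 / (n : ℝ))
      atTop (nhds 0) :=
    master_limit (fun n => by linarith [Nat.cast_nonneg (α := ℝ) (m n)]) hsmall
  refine main_assembly hlam hmeas (fun n => indep_restrict hindep n)
    (fun n => blockLoss l n (m n + 1) (S (m n)) (restrV n x))
    (fun n => Kq n (m n + 1) * Kq n (m n + 1))
    (fun n => ewEta n (m n + 1) lmax lam)
    (fun n => ((m n + 1 : ℕ) : ℝ) ^ 2 * lmax)
    hdist
    (fun n j i => blockLoss_bounds hl n (m n + 1) (S (m n)) (restrV n x) j i)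
    (fun n => by
      have h1 : (0 : ℝ) < ((m n + 1 : ℕ) : ℝ) := by exact_mod_cast Nat.succ_pos _
      positivity)
    ⟨⟨0, hlam⟩, Finset.mem_univ _⟩
    (fun n => Real.sqrt (2 * Real.log lam) * lmax *
      (((m n : ℝ) + 1) * ((n : ℝ) + ((m n : ℝ) + 1)) + (n : ℝ) * ((m n : ℝ) + 1) ^ 2))
    (fun n => ((m n : ℝ) + 1) ^ 2 * lmax ^ 2)
    ?_ ?_ ?_ ?_ ?_
  · -- deterministic regret bound
    intro n
    have hcast : ((m n + 1 : ℕ) : ℝ) = (m n : ℝ) + 1 := by push_cast; ring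
    have hrn1 : (1 : ℝ) ≤ ((m n + 1 : ℕ) : ℝ) := by
      exact_mod_cast Nat.succ_le_succ (Nat.zero_le _)
    have hnn0 : (0 : ℝ) ≤ (n : ℝ) := Nat.cast_nonneg n
    have hKrn : ((Kq n (m n + 1) : ℕ) : ℝ) * ((m n + 1 : ℕ) : ℝ) ≤ (n : ℝ) := by
      exact_mod_cast Kq_mul_le n (m n + 1) (Nat.succ_pos _)
    have hK0 : (0 : ℝ) ≤ ((Kq n (m n + 1) : ℕ) : ℝ) := Nat.cast_nonneg _
    have hηeq : ewEta n (m n + 1) lmax lam =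
        2 * Real.sqrt (2 * Real.log lam) /
          (((m n + 1 : ℕ) : ℝ) * lmax * ((n : ℝ) + ((m n + 1 : ℕ) : ℝ))) := rfl
    have hηpos : 0 < ewEta n (m n + 1) lmax lam := by
      rw [hηeq]
      apply div_pos
      · have h2 : 0 < Real.sqrt (2 * Real.log lam) := Real.sqrt_pos.2 (by linarith)
        linarith
      · exact mul_pos (mul_pos (by linarith) hlmaxpos) (by linarith)
    have harith := eta_arith hL hlmaxpos hrn1 hnn0 hK0 hKrn
    rw [← hηeq] at harith
    have hee := eta_expected_le (J := Fin lam) hηpos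
      (c := ((m n + 1 : ℕ) : ℝ) ^ 2 * lmax) (by positivity)
      (fun j i => blockLoss_bounds hl n (m n + 1) (S (m n)) (restrV n x) j i)
      (Kq n (m n + 1) * Kq n (m n + 1)) ⟨⟨0, hlam⟩, Finset.mem_univ _⟩
    rw [Fintype.card_fin] at hee
    have hcastKK : ((Kq n (m n + 1) * Kq n (m n + 1) : ℕ) : ℝ) =
        ((Kq n (m n + 1) : ℕ) : ℝ) * ((Kq n (m n + 1) : ℕ) : ℝ) := by push_cast; ring
    rw [hcastKK] at hee
    rw [hcast] at harith hee
    have hMle := expected_ge_min (J := Fin lam) hηpos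
      (blockLoss l n (m n + 1) (S (m n)) (restrV n x))
      (Kq n (m n + 1) * Kq n (m n + 1)) ⟨⟨0, hlam⟩, Finset.mem_univ _⟩
    have hD0 : 0 ≤ Real.sqrt (2 * Real.log lam) * lmax *
        (((m n : ℝ) + 1) * ((n : ℝ) + ((m n : ℝ) + 1)) + (n : ℝ) * ((m n : ℝ) + 1) ^ 2) := by
      positivity
    set ηv : ℝ := ewEta n (m n + 1) lmax lam with hetav
    set Ev : ℝ := ewExpectedLoss ηv
      (blockLoss l n (m n + 1) (S (m n)) (restrV n x))
      (Kq n (m n + 1) * Kq n (m n + 1)) with hEv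
    set Mv : ℝ := Finset.univ.inf' ⟨⟨0, hlam⟩, Finset.mem_univ _⟩
      (fun j => cumBlockLoss (blockLoss l n (m n + 1) (S (m n)) (restrV n x)) j
        (Kq n (m n + 1) * Kq n (m n + 1))) with hMv
    set Dv : ℝ := Real.sqrt (2 * Real.log lam) * lmax *
      (((m n : ℝ) + 1) * ((n : ℝ) + ((m n : ℝ) + 1)) +
        (n : ℝ) * ((m n : ℝ) + 1) ^ 2) with hDv
    set KKv : ℝ := ((Kq n (m n + 1) : ℕ) : ℝ) * ((Kq n (m n + 1) : ℕ) : ℝ) *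
      (ηv ^ 2 * (((m n : ℝ) + 1) ^ 2 * lmax) ^ 2 / 2) with hKKv
    rw [abs_sub_le_iff]
    constructor
    · have h7 : ηv * Ev ≤ ηv * (Mv + Dv) := by
        rw [mul_add]
        linarith [hee, harith]
      have h8 := le_of_mul_le_mul_left h7 hηpos
      linarith [h8]
    · linarith [hMle, hD0]
  · -- limit of D n / n^2
    have hb := hmaster.const_mul (3 * Real.sqrt (2 * Real.log lam) * lmax)
    rw [mul_zero] at hb
    refine squeeze_zero' (Filter.Eventually.of_forall fun n => by positivity) ?_ hb
    · filter_upwards [Filter.eventually_ge_atTop 1] with n hn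
      have hn1 : (1 : ℝ) ≤ (n : ℝ) := by exact_mod_cast hn
      have hn2 : (0 : ℝ) < (n : ℝ) ^ 2 := by positivity
      have h0rn : (0 : ℝ) ≤ (m n : ℝ) + 1 := by positivity
      have hrn1 : (1 : ℝ) ≤ (m n : ℝ) + 1 := by
        linarith [Nat.cast_nonneg (α := ℝ) (m n)]
      have hnum : Real.sqrt (2 * Real.log lam) * lmax *
          (((m n : ℝ) + 1) * ((n : ℝ) + ((m n : ℝ) + 1)) + (n : ℝ) * ((m n : ℝ) + 1) ^ 2) ≤
          3 * Real.sqrt (2 * Real.log lam) * lmax * (((m n : ℝ) + 1) ^ 2 * (n : ℝ)) := by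
        have hs0 : 0 ≤ Real.sqrt (2 * Real.log lam) := Real.sqrt_nonneg _
        have hkey : ((m n : ℝ) + 1) * ((n : ℝ) + ((m n : ℝ) + 1)) +
            (n : ℝ) * ((m n : ℝ) + 1) ^ 2 ≤ 3 * (((m n : ℝ) + 1) ^ 2 * (n : ℝ)) := by
          nlinarith [mul_nonneg (mul_nonneg (sub_nonneg.2 hrn1) h0rn)
              (by linarith : (0 : ℝ) ≤ (n : ℝ)),
            mul_nonneg (mul_nonneg h0rn h0rn) (sub_nonneg.2 hn1)]
        have := mul_le_mul_of_nonneg_left hkey (mul_nonneg hs0 hlmax0)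
        nlinarith [this]
      calc Real.sqrt (2 * Real.log lam) * lmax *
            (((m n : ℝ) + 1) * ((n : ℝ) + ((m n : ℝ) + 1)) +
              (n : ℝ) * ((m n : ℝ) + 1) ^ 2) / (n : ℝ) ^ 2
          ≤ 3 * Real.sqrt (2 * Real.log lam) * lmax *
              (((m n : ℝ) + 1) ^ 2 * (n : ℝ)) / (n : ℝ) ^ 2 := by
            exact div_le_div_of_nonneg_right hnum hn2.le
        _ = 3 * Real.sqrt (2 * Real.log lam) * lmax * (((m n : ℝ) + 1) ^ 2 / (n : ℝ)) := by
            field_simp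
  · -- T * c^2 ≤ n^2 * G
    intro n
    have hKrn : ((Kq n (m n + 1) : ℕ) : ℝ) * ((m n + 1 : ℕ) : ℝ) ≤ (n : ℝ) := by
      exact_mod_cast Kq_mul_le n (m n + 1) (Nat.succ_pos _)
    have h1 := mul_self_le_mul_self
      (by positivity : (0 : ℝ) ≤ ((Kq n (m n + 1) : ℕ) : ℝ) * ((m n + 1 : ℕ) : ℝ)) hKrn
    have hcast : ((m n + 1 : ℕ) : ℝ) = (m n : ℝ) + 1 := by push_cast; ring
    push_cast
    rw [hcast] at h1
    nlinarith [h1, sq_nonneg ((m n : ℝ) + 1), sq_nonneg lmax,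
      mul_le_mul_of_nonneg_right h1
        (show (0 : ℝ) ≤ ((m n : ℝ) + 1) ^ 2 * lmax ^ 2 by positivity)]
  · -- limit of G n / n
    have heq : (fun n => ((m n : ℝ) + 1) ^ 2 * lmax ^ 2 / (n : ℝ)) =
        fun n => lmax ^ 2 * (((m n : ℝ) + 1) ^ 2 / (n : ℝ)) := by
      funext n
      ring
    rw [heq]
    have := hmaster.const_mul (lmax ^ 2)
    rw [mul_zero] at this
    exact this
  · -- eventually T n > 0
    have h0 : ∀ᶠ n in atTop, ((m n : ℝ) + 1) ^ 2 / (n : ℝ) < 1 / 2 :=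
      hmaster.eventually_lt_const (by norm_num)
    filter_upwards [h0, Filter.eventually_ge_atTop 1] with n h1 h2
    have hn0 : (0 : ℝ) < (n : ℝ) := by exact_mod_cast h2
    have h3 : ((m n : ℝ) + 1) ^ 2 < (n : ℝ) / 2 := by
      have := (div_lt_iff₀ hn0).1 h1
      linarith
    have h4 : ((m n + 2 : ℕ) : ℝ) < (n : ℝ) := by
      push_cast
      nlinarith [sq_nonneg ((m n : ℝ) + 1), sq_nonneg ((m n : ℝ))]
    have h5 : m n + 2 ≤ n := by
      have := (Nat.cast_lt (α := ℝ)).1 h4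
      omega
    have h6 : 0 < Kq n (m n + 1) := Kq_pos (Nat.succ_pos _) (by omega)
    exact Nat.mul_pos h6 h6

end Scandiction
end

section
/- Let Xⁿ be an arbitrarily distributed binary n-tuple with law P on {0,1}ⁿ and l : {0,1}×[0,1] → [0,∞) a loss function. Let L*(P) = inf over predictor sequences F_t : {0,1}^{t−1} → [0,1] of E_P[ Σ_{t=1}^n l(X_t, F_t(X^{t−1})) ] denote the expected cumulative loss of the optimal distribution-dependent prediction scheme, and let H(Xⁿ) = −Σ_{x∈{0,1}ⁿ} P(x) log P(x) (nats). Then for every α, β ∈ ℝ: | α·H(Xⁿ)/n + β − L*(P)/n | ≤ ε_l(α,β); in particular, with (α_l,β_l) achieving the infimum defining ε_l, the left-hand side is at most ε_l. -/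
open MeasureTheory Filter Real

namespace Scandiction

variable {A D B : Type*}

/-- Binary entropy (in nats): `h_b(p) = -p log p - (1-p) log (1-p)`. -/
noncomputable def hb (p : ℝ) : ℝ := Real.negMulLog p + Real.negMulLog (1 - p)

/-- Bayes envelope `φ_l(p) = inf_{q ∈ [0,1]} [(1-p)·l(0,q) + p·l(1,q)]`. -/
noncomputable def bayesEnv (l : Bool → unitInterval → ℝ) (p : ℝ) : ℝ :=
  ⨅ q : unitInterval, ((1 - p) * l false q + p * l true q)

/-- `ε_l(α,β) = sup_{p ∈ [0,1]} |α·h_b(p) + β − φ_l(p)|`. -/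
noncomputable def epsF (l : Bool → unitInterval → ℝ) (α β : ℝ) : ℝ :=
  ⨆ p : unitInterval, |α * hb (p : ℝ) + β - bayesEnv l (p : ℝ)|

/-- `ε_l = inf_{α,β} ε_l(α,β)`. -/
noncomputable def epsL (l : Bool → unitInterval → ℝ) : ℝ :=
  ⨅ ab : ℝ × ℝ, epsF l ab.1 ab.2

/-- Expected cumulative loss, under the law `Q` on `{0,1}^B`, of the scan `Ψ` accompanied
by its optimal predictor. -/
noncomputable def optScanLoss [Fintype B] [DecidableEq B] (l : Bool → unitInterval → ℝ)
    (Q : (B → Bool) → ℝ) (Ψ : ∀ t : ℕ, (Fin t → Bool) → B) : ℝ :=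
  ⨅ F : ∀ t : ℕ, (Fin t → Bool) → unitInterval, ∑ x : B → Bool, Q x * cumLoss l Ψ F x

/-- Shannon entropy (in nats) of the law `Q`. -/
noncomputable def entQ [Fintype B] [DecidableEq B] (Q : (B → Bool) → ℝ) : ℝ :=
  ∑ x : B → Bool, Real.negMulLog (Q x)

/-- Scandictability of the law `Q` on `{0,1}^B`. -/
noncomputable def scandQ [Fintype B] [DecidableEq B] (l : Bool → unitInterval → ℝ)
    (Q : (B → Bool) → ℝ) : ℝ :=
  ⨅ Ψ : {Ψ : ∀ t : ℕ, (Fin t → Bool) → B // IsValidScan Ψ},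
    optScanLoss l Q Ψ.1 / Fintype.card B

section aux

variable {n : ℕ}

/-- Prefix of length `k` of a binary `n`-tuple (junk `false` out of range). -/
def pre (x : Fin n → Bool) (k : ℕ) : Fin k → Bool :=
  fun i => if h : i.1 < n then x ⟨i.1, h⟩ else false

/-- Probability that the first `k` coordinates agree with `s`. -/
noncomputable def W (P : (Fin n → Bool) → ℝ) (k : ℕ) (s : Fin k → Bool) : ℝ :=
  ∑ x : Fin n → Bool, if pre x k = s then P x else 0

lemma pre_succ (x : Fin n → Bool) {k : ℕ} (hk : k < n) :
    pre x (k + 1) = Fin.snoc (pre x k) (x ⟨k, hk⟩) := by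
  funext i
  refine Fin.lastCases ?_ (fun j => ?_) i
  · simp [pre, Fin.snoc_last, hk]
  · simp only [Fin.snoc_castSucc]
    simp [pre]

lemma snoc_eq_snoc_iff {k : ℕ} {p q : Fin k → Bool} {a b : Bool} :
    (Fin.snoc p a : Fin (k+1) → Bool) = Fin.snoc q b ↔ p = q ∧ a = b := by
  constructor
  · intro h
    constructor
    · have := congrArg Fin.init h
      simpa [Fin.init_snoc] using this
    · have := congrFun h (Fin.last k)
      simpa [Fin.snoc_last] using this
  · rintro ⟨rfl, rfl⟩; rfl

lemma W_nonneg {P : (Fin n → Bool) → ℝ} (hP0 : ∀ x, 0 ≤ P x) (k : ℕ) (s : Fin k → Bool) :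
    0 ≤ W P k s := by
  refine Finset.sum_nonneg fun x _ => ?_
  split
  · exact hP0 x
  · exact le_rfl

def snocEquiv (k : ℕ) : ((Fin k → Bool) × Bool) ≃ (Fin (k+1) → Bool) where
  toFun := fun p => Fin.snoc p.1 p.2
  invFun := fun s => (Fin.init s, s (Fin.last k))
  left_inv := fun p => by simp [Fin.init_snoc, Fin.snoc_last]
  right_inv := fun s => by simp [Fin.snoc_init_self]

lemma sum_snoc {k : ℕ} (f : (Fin (k+1) → Bool) → ℝ) :
    ∑ s : Fin (k+1) → Bool, f s
      = ∑ s : Fin k → Bool, (f (Fin.snoc s false) + f (Fin.snoc s true)) := by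
  rw [← Fintype.sum_equiv (snocEquiv k) (fun p => f (snocEquiv k p)) f (fun p => rfl)]
  rw [Fintype.sum_prod_type]
  refine Finset.sum_congr rfl fun s _ => ?_
  rw [Fintype.sum_bool]
  exact add_comm (f (Fin.snoc s true)) (f (Fin.snoc s false))

lemma W_split {P : (Fin n → Bool) → ℝ} {k : ℕ} (hk : k < n) (s : Fin k → Bool) :
    W P k s = W P (k+1) (Fin.snoc s false) + W P (k+1) (Fin.snoc s true) := by
  unfold W
  rw [← Finset.sum_add_distrib]
  refine Finset.sum_congr rfl fun x _ => ?_
  rw [pre_succ x hk]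
  rcases Bool.eq_false_or_eq_true (x ⟨k, hk⟩) with h | h <;>
    by_cases hs : pre x k = s <;>
      simp [snoc_eq_snoc_iff, h, hs]

lemma sum_W (P : (Fin n → Bool) → ℝ) (k : ℕ) :
    ∑ s : Fin k → Bool, W P k s = ∑ x, P x := by
  unfold W
  rw [Finset.sum_comm]
  refine Finset.sum_congr rfl fun x _ => ?_
  simp

lemma W_top (P : (Fin n → Bool) → ℝ) (s : Fin n → Bool) : W P n s = P s := by
  unfold W
  have : ∀ x : Fin n → Bool, pre x n = x := by
    intro x; funext i; simp [pre]
  simp only [this]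
  simp

end aux
lemma mul_negMulLog_div {a w : ℝ} (ha : 0 ≤ a) (hw : 0 < w) :
    w * Real.negMulLog (a / w) = Real.negMulLog a + a * Real.log w := by
  rcases eq_or_lt_of_le ha with h | h
  · simp [← h, Real.negMulLog]
  · rw [Real.negMulLog, Real.negMulLog, Real.log_div (ne_of_gt h) (ne_of_gt hw)]
    field_simp
    ring

lemma entropy_step {w0 w1 : ℝ} (h0 : 0 ≤ w0) (h1 : 0 ≤ w1) (hw : 0 < w0 + w1) :
    Real.negMulLog w0 + Real.negMulLog w1 - Real.negMulLog (w0 + w1)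
      = (w0 + w1) * hb (w1 / (w0 + w1)) := by
  have e1 : 1 - w1 / (w0 + w1) = w0 / (w0 + w1) := by field_simp; ring
  rw [hb, e1, mul_add, mul_negMulLog_div h1 hw, mul_negMulLog_div h0 hw]
  simp only [Real.negMulLog]
  ring

lemma loss_step (l : Bool → unitInterval → ℝ) {w0 w1 : ℝ}
    (hw : 0 < w0 + w1) :
    (⨅ q : unitInterval, (w0 * l false q + w1 * l true q))
      = (w0 + w1) * bayesEnv l (w1 / (w0 + w1)) := by
  rw [bayesEnv, Real.mul_iInf_of_nonneg hw.le]
  congr 1; funext q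
  have e1 : 1 - w1 / (w0 + w1) = w0 / (w0 + w1) := by field_simp; ring
  rw [e1]
  field_simp

lemma hb_nonneg (p : unitInterval) : 0 ≤ hb (p : ℝ) := by
  rw [hb, ← Real.binEntropy_eq_negMulLog_add_negMulLog_one_sub]
  exact Real.binEntropy_nonneg p.2.1 p.2.2

lemma hb_le (p : unitInterval) : hb (p : ℝ) ≤ Real.log 2 := by
  rw [hb, ← Real.binEntropy_eq_negMulLog_add_negMulLog_one_sub]
  exact Real.binEntropy_le_log_two

lemma bayesEnv_nonneg (l : Bool → unitInterval → ℝ) (hl : ∀ b q, 0 ≤ l b q)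
    (p : unitInterval) : 0 ≤ bayesEnv l (p : ℝ) := by
  refine le_ciInf fun q => ?_
  show 0 ≤ (1 - (p : ℝ)) * l false q + (p : ℝ) * l true q
  have h1 := p.2.1; have h2 := p.2.2
  exact add_nonneg (mul_nonneg (by linarith) (hl false q)) (mul_nonneg h1 (hl true q))

lemma bayesEnv_le (l : Bool → unitInterval → ℝ) (hl : ∀ b q, 0 ≤ l b q)
    (p : unitInterval) : bayesEnv l (p : ℝ) ≤ l false 0 + l true 0 := by
  refine le_trans (ciInf_le ⟨0, ?_⟩ (0 : unitInterval)) ?_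
  · rintro _ ⟨q, rfl⟩
    have h1 := p.2.1; have h2 := p.2.2
    exact add_nonneg (mul_nonneg (by linarith) (hl false q)) (mul_nonneg h1 (hl true q))
  · have h1 := p.2.1; have h2 := p.2.2
    have h3 := hl false (0 : unitInterval); have h4 := hl true (0 : unitInterval)
    show (1 - (p : ℝ)) * l false 0 + (p : ℝ) * l true 0 ≤ l false 0 + l true 0
    nlinarith

lemma abs_le_epsF (l : Bool → unitInterval → ℝ) (hl : ∀ b q, 0 ≤ l b q)
    (α β : ℝ) (p : unitInterval) :
    |α * hb (p : ℝ) + β - bayesEnv l (p : ℝ)| ≤ epsF l α β := by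
  refine le_ciSup (f := fun r : unitInterval => |α * hb (r : ℝ) + β - bayesEnv l (r : ℝ)|)
    ⟨|α| * Real.log 2 + |β| + (l false 0 + l true 0), ?_⟩ p
  rintro _ ⟨r, rfl⟩
  have h1 : |α * hb (r : ℝ)| ≤ |α| * Real.log 2 := by
    rw [abs_mul]
    exact mul_le_mul_of_nonneg_left (by rw [abs_of_nonneg (hb_nonneg r)]; exact hb_le r)
      (abs_nonneg α)
  have h2 : |bayesEnv l (r : ℝ)| ≤ l false 0 + l true 0 := by
    rw [abs_of_nonneg (bayesEnv_nonneg l hl r)]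
    exact bayesEnv_le l hl r
  have h3 := abs_add_three (α * hb (r : ℝ)) β (-(bayesEnv l (r : ℝ)))
  rw [abs_neg, ← sub_eq_add_neg] at h3
  show |α * hb (r : ℝ) + β - bayesEnv l (r : ℝ)| ≤ _
  linarith

lemma perTerm (l : Bool → unitInterval → ℝ) (hl : ∀ b q, 0 ≤ l b q) (α β : ℝ)
    {w0 w1 : ℝ} (h0 : 0 ≤ w0) (h1 : 0 ≤ w1) :
    |α * (Real.negMulLog w0 + Real.negMulLog w1 - Real.negMulLog (w0 + w1)) + (w0 + w1) * β
        - ⨅ q : unitInterval, (w0 * l false q + w1 * l true q)|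
      ≤ (w0 + w1) * epsF l α β := by
  rcases eq_or_lt_of_le (add_nonneg h0 h1) with hw | hw
  · have e0 : w0 = 0 := by linarith
    have e1 : w1 = 0 := by linarith
    subst e0; subst e1
    simp [ciInf_const]
  · have hp0 : 0 ≤ w1 / (w0 + w1) := div_nonneg h1 hw.le
    have hp1 : w1 / (w0 + w1) ≤ 1 := by
      rw [div_le_one hw]; linarith
    set p : unitInterval := ⟨w1 / (w0 + w1), hp0, hp1⟩ with hp
    rw [entropy_step h0 h1 hw, loss_step l hw]
    have : α * ((w0 + w1) * hb (w1 / (w0 + w1))) + (w0 + w1) * β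
        - (w0 + w1) * bayesEnv l (w1 / (w0 + w1))
        = (w0 + w1) * (α * hb (p : ℝ) + β - bayesEnv l (p : ℝ)) := by
      simp only [hp]
      ring
    rw [this, abs_mul, abs_of_nonneg hw.le]
    exact mul_le_mul_of_nonneg_left (abs_le_epsF l hl α β p) hw.le

section main

variable {n : ℕ}

noncomputable def Hk (P : (Fin n → Bool) → ℝ) (k : ℕ) : ℝ :=
  ∑ s : Fin k → Bool, Real.negMulLog (W P k s)

lemma chainRule (P : (Fin n → Bool) → ℝ) (hP1 : ∑ x, P x = 1) :
    ∑ x : Fin n → Bool, Real.negMulLog (P x)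
      = ∑ t : Fin n, ∑ s : Fin t.1 → Bool,
          (Real.negMulLog (W P (t.1+1) (Fin.snoc s false))
            + Real.negMulLog (W P (t.1+1) (Fin.snoc s true))
            - Real.negMulLog (W P t.1 s)) := by
  have step : ∀ k : ℕ, ∑ s : Fin k → Bool,
      (Real.negMulLog (W P (k+1) (Fin.snoc s false))
        + Real.negMulLog (W P (k+1) (Fin.snoc s true))
        - Real.negMulLog (W P k s)) = Hk P (k+1) - Hk P k := by
    intro k
    rw [Finset.sum_sub_distrib, Hk, Hk, sum_snoc (fun s => Real.negMulLog (W P (k+1) s))]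
  have tele : ∑ t : Fin n, (Hk P (t.1+1) - Hk P t.1) = Hk P n - Hk P 0 := by
    rw [Fin.sum_univ_eq_sum_range (fun i => Hk P (i+1) - Hk P i)]
    exact Finset.sum_range_sub (Hk P) n
  have h0 : Hk P 0 = 0 := by
    have hu : ∀ x : Fin n → Bool, pre x 0 = (default : Fin 0 → Bool) :=
      fun x => Subsingleton.elim _ _
    rw [Hk]
    rw [Fintype.sum_unique (fun s : Fin 0 → Bool => Real.negMulLog (W P 0 s))]
    have hW1 : ∀ s : Fin 0 → Bool, W P 0 s = 1 := by
      intro s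
      rw [W, show (fun x : Fin n → Bool => if pre x 0 = s then P x else 0) = P from
        funext fun x => if_pos (Subsingleton.elim _ _)]
      exact hP1
    rw [hW1, Real.negMulLog_one]
  have hn : Hk P n = ∑ x : Fin n → Bool, Real.negMulLog (P x) := by
    rw [Hk]
    refine Finset.sum_congr rfl fun s _ => ?_
    rw [W_top]
  simp only [step, tele, h0, hn, sub_zero]

lemma regroup (P : (Fin n → Bool) → ℝ) (l : Bool → unitInterval → ℝ) (t : Fin n)
    (G : (Fin t.1 → Bool) → unitInterval) :
    ∑ x : Fin n → Bool, P x * l (x t) (G (pre x t.1))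
      = ∑ s : Fin t.1 → Bool,
          (W P (t.1+1) (Fin.snoc s false) * l false (G s)
            + W P (t.1+1) (Fin.snoc s true) * l true (G s)) := by
  have hc : ∀ (x : Fin n → Bool) (s : Fin t.1 → Bool) (b : Bool),
      (pre x (t.1+1) = Fin.snoc s b) ↔ (pre x t.1 = s ∧ x t = b) := by
    intro x s b
    rw [pre_succ x t.isLt, snoc_eq_snoc_iff, Fin.eta]
  have step1 : ∀ x : Fin n → Bool,
      P x * l (x t) (G (pre x t.1))
        = ∑ s : Fin t.1 → Bool, ∑ b : Bool,
            (if pre x (t.1+1) = Fin.snoc s b then P x * l b (G s) else 0) := by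
    intro x
    simp only [hc]
    have inner : ∀ s : Fin t.1 → Bool,
        (∑ b : Bool, if pre x t.1 = s ∧ x t = b then P x * l b (G s) else 0)
          = if pre x t.1 = s then P x * l (x t) (G s) else 0 := by
      intro s
      by_cases hs : pre x t.1 = s <;> simp [hs]
    simp only [inner]
    rw [Finset.sum_ite_eq]
    simp
  rw [Finset.sum_congr rfl fun x _ => step1 x, Finset.sum_comm]
  refine Finset.sum_congr rfl fun s _ => ?_
  rw [Finset.sum_comm, Fintype.sum_bool]
  have hW : ∀ b : Bool,
      (∑ x : Fin n → Bool, if pre x (t.1+1) = Fin.snoc s b then P x * l b (G s) else 0)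
        = W P (t.1+1) (Fin.snoc s b) * l b (G s) := by
    intro b
    rw [W, Finset.sum_mul]
    refine Finset.sum_congr rfl fun x _ => ?_
    by_cases h : pre x (t.1+1) = Fin.snoc s b <;> simp [h]
  rw [hW true, hW false]
  ring

end main

section infpart

variable {n : ℕ}

lemma rewriteF (P : (Fin n → Bool) → ℝ) (l : Bool → unitInterval → ℝ)
    (F : ∀ t : ℕ, (Fin t → Bool) → unitInterval) :
    ∑ x : Fin n → Bool, P x *
        ∑ t : Fin n, l (x t) (F t.1 fun i : Fin t.1 => x ⟨i.1, lt_trans i.2 t.isLt⟩)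
      = ∑ t : Fin n, ∑ s : Fin t.1 → Bool,
          (W P (t.1+1) (Fin.snoc s false) * l false (F t.1 s)
            + W P (t.1+1) (Fin.snoc s true) * l true (F t.1 s)) := by
  have hpre : ∀ (x : Fin n → Bool) (t : Fin n),
      (fun i : Fin t.1 => x ⟨i.1, lt_trans i.2 t.isLt⟩) = pre x t.1 := by
    intro x t
    funext i
    simp [pre, lt_trans i.2 t.isLt]
  calc ∑ x : Fin n → Bool, P x *
        ∑ t : Fin n, l (x t) (F t.1 fun i : Fin t.1 => x ⟨i.1, lt_trans i.2 t.isLt⟩)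
      = ∑ t : Fin n, ∑ x : Fin n → Bool, P x * l (x t) (F t.1 (pre x t.1)) := by
        simp only [hpre, Finset.mul_sum]
        rw [Finset.sum_comm]
    _ = _ := Finset.sum_congr rfl fun t _ => regroup P l t (F t.1)

lemma inf_eq_sum (hn : 0 < n) (l : Bool → unitInterval → ℝ) (hl : ∀ b q, 0 ≤ l b q)
    (P : (Fin n → Bool) → ℝ) (hP0 : ∀ x, 0 ≤ P x) :
    (⨅ F : ∀ t : ℕ, (Fin t → Bool) → unitInterval,
        ∑ x : Fin n → Bool, P x *
          ∑ t : Fin n, l (x t) (F t.1 fun i : Fin t.1 => x ⟨i.1, lt_trans i.2 t.isLt⟩))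
      = ∑ t : Fin n, ∑ s : Fin t.1 → Bool,
          ⨅ q : unitInterval, (W P (t.1+1) (Fin.snoc s false) * l false q
            + W P (t.1+1) (Fin.snoc s true) * l true q) := by
  have hlb : ∀ (t : Fin n) (s : Fin t.1 → Bool),
      BddBelow (Set.range fun q : unitInterval =>
        (W P (t.1+1) (Fin.snoc s false) * l false q
          + W P (t.1+1) (Fin.snoc s true) * l true q)) := by
    intro t s
    refine ⟨0, ?_⟩
    rintro _ ⟨q, rfl⟩
    exact add_nonneg (mul_nonneg (W_nonneg hP0 _ _) (hl _ _))
      (mul_nonneg (W_nonneg hP0 _ _) (hl _ _))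
  refine le_antisymm ?_ ?_
  · -- inf ≤ sum of infs + ε for all ε
    refine le_of_forall_pos_le_add fun ε hε => ?_
    set T := (Σ t : Fin n, (Fin t.1 → Bool)) with hT
    have hc : (0:ℝ) < (Fintype.card T : ℝ) + 1 := by positivity
    set ε' : ℝ := ε / ((Fintype.card T : ℝ) + 1) with hε'
    have hε'pos : 0 < ε' := div_pos hε hc
    have hex : ∀ p : T, ∃ q : unitInterval,
        (W P (p.1.1+1) (Fin.snoc p.2 false) * l false q
          + W P (p.1.1+1) (Fin.snoc p.2 true) * l true q)
        < (⨅ q : unitInterval, (W P (p.1.1+1) (Fin.snoc p.2 false) * l false q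
            + W P (p.1.1+1) (Fin.snoc p.2 true) * l true q)) + ε' := by
      intro p
      exact exists_lt_of_ciInf_lt (lt_add_of_pos_right _ hε'pos)
    choose qc hqc using hex
    set F0 : ∀ t : ℕ, (Fin t → Bool) → unitInterval :=
      fun t => if h : t < n then fun s => qc ⟨⟨t, h⟩, s⟩ else fun _ => 0 with hF0def
    have hF0 : ∀ (t : Fin n) (s : Fin t.1 → Bool), F0 t.1 s = qc ⟨t, s⟩ := by
      intro t s
      show (if h : t.1 < n then fun s' : Fin t.1 → Bool => qc ⟨⟨t.1, h⟩, s'⟩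
        else fun _ => 0) s = qc ⟨t, s⟩
      rw [dif_pos t.isLt]
    have lb : BddBelow (Set.range fun F : ∀ t : ℕ, (Fin t → Bool) → unitInterval =>
        ∑ x : Fin n → Bool, P x *
          ∑ t : Fin n, l (x t) (F t.1 fun i : Fin t.1 => x ⟨i.1, lt_trans i.2 t.isLt⟩)) := by
      refine ⟨0, ?_⟩
      rintro _ ⟨F, rfl⟩
      refine Finset.sum_nonneg fun x _ => mul_nonneg (hP0 x) ?_
      exact Finset.sum_nonneg fun t _ => hl _ _
    refine le_trans (ciInf_le lb F0) ?_
    rw [rewriteF P l F0]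
    have step : ∀ (t : Fin n) (s : Fin t.1 → Bool),
        W P (t.1+1) (Fin.snoc s false) * l false (F0 t.1 s)
          + W P (t.1+1) (Fin.snoc s true) * l true (F0 t.1 s)
        ≤ (⨅ q : unitInterval, (W P (t.1+1) (Fin.snoc s false) * l false q
            + W P (t.1+1) (Fin.snoc s true) * l true q)) + ε' := by
      intro t s
      rw [hF0 t s]
      exact (hqc ⟨t, s⟩).le
    calc ∑ t : Fin n, ∑ s : Fin t.1 → Bool,
          (W P (t.1+1) (Fin.snoc s false) * l false (F0 t.1 s)
            + W P (t.1+1) (Fin.snoc s true) * l true (F0 t.1 s))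
        ≤ ∑ t : Fin n, ∑ s : Fin t.1 → Bool,
            ((⨅ q : unitInterval, (W P (t.1+1) (Fin.snoc s false) * l false q
              + W P (t.1+1) (Fin.snoc s true) * l true q)) + ε') :=
          Finset.sum_le_sum fun t _ => Finset.sum_le_sum fun s _ => step t s
      _ = (∑ t : Fin n, ∑ s : Fin t.1 → Bool,
            ⨅ q : unitInterval, (W P (t.1+1) (Fin.snoc s false) * l false q
              + W P (t.1+1) (Fin.snoc s true) * l true q))
          + (Fintype.card T : ℝ) * ε' := by
          rw [Finset.sum_congr rfl (fun t _ => Finset.sum_add_distrib), Finset.sum_add_distrib]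
          congr 1
          rw [Finset.sum_sigma' Finset.univ (fun _ => Finset.univ) (fun _ _ => ε'),
            Finset.univ_sigma_univ, Finset.sum_const, nsmul_eq_mul, Finset.card_univ]
      _ ≤ _ + ε := by
          refine add_le_add le_rfl ?_
          rw [hε', mul_comm, div_mul_eq_mul_div, div_le_iff₀ hc]
          nlinarith [hε.le, Nat.cast_nonneg (α := ℝ) (Fintype.card T)]
  · refine le_ciInf fun F => ?_
    rw [rewriteF P l F]
    refine Finset.sum_le_sum fun t _ => Finset.sum_le_sum fun s _ => ?_
    exact ciInf_le (hlb t s) (F t.1 s)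

end infpart

/-- One-dimensional prediction: for an arbitrarily distributed binary
`n`-tuple with law `P`, the optimal expected cumulative prediction loss, normalized by `n`,
is within `ε_l(α,β)` of the best affine function of the normalized entropy. -/
theorem statement14 (n : ℕ) (hn : 0 < n)
    (l : Bool → unitInterval → ℝ) (hl : ∀ b q, 0 ≤ l b q)
    (P : (Fin n → Bool) → ℝ) (hP0 : ∀ x, 0 ≤ P x) (hP1 : ∑ x, P x = 1)
    (α β : ℝ) :
    |α * ((∑ x : Fin n → Bool, Real.negMulLog (P x)) / n) + β
        - (⨅ F : ∀ t : ℕ, (Fin t → Bool) → unitInterval,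
            ∑ x : Fin n → Bool, P x *
              ∑ t : Fin n, l (x t) (F t.1 fun i : Fin t.1 => x ⟨i.1, lt_trans i.2 t.isLt⟩)) / n|
      ≤ epsF l α β := by
  have hL := inf_eq_sum hn l hl P hP0
  have hH := chainRule P hP1
  have hsW : ∀ t : Fin n, ∑ s : Fin t.1 → Bool, W P t.1 s = 1 :=
    fun t => (sum_W P t.1).trans hP1
  have key : |α * (∑ x : Fin n → Bool, Real.negMulLog (P x)) + (n:ℝ) * β
      - ∑ t : Fin n, ∑ s : Fin t.1 → Bool,
          ⨅ q : unitInterval, (W P (t.1+1) (Fin.snoc s false) * l false q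
            + W P (t.1+1) (Fin.snoc s true) * l true q)|
      ≤ (n:ℝ) * epsF l α β := by
    have inner : ∀ t : Fin n,
        ∑ s : Fin t.1 → Bool,
          (α * (Real.negMulLog (W P (t.1+1) (Fin.snoc s false))
              + Real.negMulLog (W P (t.1+1) (Fin.snoc s true))
              - Real.negMulLog (W P t.1 s))
            + W P t.1 s * β
            - ⨅ q : unitInterval, (W P (t.1+1) (Fin.snoc s false) * l false q
                + W P (t.1+1) (Fin.snoc s true) * l true q))
        = α * (∑ s : Fin t.1 → Bool,
              (Real.negMulLog (W P (t.1+1) (Fin.snoc s false))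
                + Real.negMulLog (W P (t.1+1) (Fin.snoc s true))
                - Real.negMulLog (W P t.1 s))) + β
          - ∑ s : Fin t.1 → Bool,
              ⨅ q : unitInterval, (W P (t.1+1) (Fin.snoc s false) * l false q
                + W P (t.1+1) (Fin.snoc s true) * l true q) := by
      intro t
      rw [Finset.sum_sub_distrib, Finset.sum_add_distrib, ← Finset.mul_sum,
        ← Finset.sum_mul, hsW t, one_mul]
    have hdec : α * (∑ x : Fin n → Bool, Real.negMulLog (P x)) + (n:ℝ) * β
        - (∑ t : Fin n, ∑ s : Fin t.1 → Bool,
            ⨅ q : unitInterval, (W P (t.1+1) (Fin.snoc s false) * l false q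
              + W P (t.1+1) (Fin.snoc s true) * l true q))
        = ∑ t : Fin n, ∑ s : Fin t.1 → Bool,
            (α * (Real.negMulLog (W P (t.1+1) (Fin.snoc s false))
                + Real.negMulLog (W P (t.1+1) (Fin.snoc s true))
                - Real.negMulLog (W P t.1 s))
              + W P t.1 s * β
              - ⨅ q : unitInterval, (W P (t.1+1) (Fin.snoc s false) * l false q
                  + W P (t.1+1) (Fin.snoc s true) * l true q)) := by
      rw [hH, Finset.sum_congr rfl fun t _ => inner t, Finset.sum_sub_distrib,
        Finset.sum_add_distrib, ← Finset.mul_sum, Finset.sum_const, Finset.card_univ,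
        Fintype.card_fin, nsmul_eq_mul]
    rw [hdec]
    calc |∑ t : Fin n, ∑ s : Fin t.1 → Bool,
            (α * (Real.negMulLog (W P (t.1+1) (Fin.snoc s false))
                + Real.negMulLog (W P (t.1+1) (Fin.snoc s true))
                - Real.negMulLog (W P t.1 s))
              + W P t.1 s * β
              - ⨅ q : unitInterval, (W P (t.1+1) (Fin.snoc s false) * l false q
                  + W P (t.1+1) (Fin.snoc s true) * l true q))|
        ≤ ∑ t : Fin n, |∑ s : Fin t.1 → Bool,
            (α * (Real.negMulLog (W P (t.1+1) (Fin.snoc s false))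
                + Real.negMulLog (W P (t.1+1) (Fin.snoc s true))
                - Real.negMulLog (W P t.1 s))
              + W P t.1 s * β
              - ⨅ q : unitInterval, (W P (t.1+1) (Fin.snoc s false) * l false q
                  + W P (t.1+1) (Fin.snoc s true) * l true q))| :=
          Finset.abs_sum_le_sum_abs _ _
      _ ≤ ∑ t : Fin n, ∑ s : Fin t.1 → Bool,
            |α * (Real.negMulLog (W P (t.1+1) (Fin.snoc s false))
                + Real.negMulLog (W P (t.1+1) (Fin.snoc s true))
                - Real.negMulLog (W P t.1 s))
              + W P t.1 s * β
              - ⨅ q : unitInterval, (W P (t.1+1) (Fin.snoc s false) * l false q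
                  + W P (t.1+1) (Fin.snoc s true) * l true q)| :=
          Finset.sum_le_sum fun t _ => Finset.abs_sum_le_sum_abs _ _
      _ ≤ ∑ t : Fin n, ∑ s : Fin t.1 → Bool, W P t.1 s * epsF l α β := by
          refine Finset.sum_le_sum fun t _ => Finset.sum_le_sum fun s _ => ?_
          rw [W_split t.isLt s]
          exact perTerm l hl α β (W_nonneg hP0 _ _) (W_nonneg hP0 _ _)
      _ = (n:ℝ) * epsF l α β := by
          rw [Finset.sum_congr rfl fun t _ => by
            rw [← Finset.sum_mul, hsW t, one_mul]]
          rw [Finset.sum_const, Finset.card_univ, Fintype.card_fin, nsmul_eq_mul]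
  have hn' : (0:ℝ) < n := Nat.cast_pos.mpr hn
  rw [hL]
  have heq : α * ((∑ x : Fin n → Bool, Real.negMulLog (P x)) / n) + β
      - (∑ t : Fin n, ∑ s : Fin t.1 → Bool,
          ⨅ q : unitInterval, (W P (t.1+1) (Fin.snoc s false) * l false q
            + W P (t.1+1) (Fin.snoc s true) * l true q)) / n
      = (α * (∑ x : Fin n → Bool, Real.negMulLog (P x)) + (n:ℝ) * β
          - ∑ t : Fin n, ∑ s : Fin t.1 → Bool,
              ⨅ q : unitInterval, (W P (t.1+1) (Fin.snoc s false) * l false q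
                + W P (t.1+1) (Fin.snoc s true) * l true q)) / n := by
    field_simp
  rw [heq, abs_div, abs_of_pos hn', div_le_iff₀ hn']
  calc |α * (∑ x : Fin n → Bool, Real.negMulLog (P x)) + (n:ℝ) * β
      - ∑ t : Fin n, ∑ s : Fin t.1 → Bool,
          ⨅ q : unitInterval, (W P (t.1+1) (Fin.snoc s false) * l false q
            + W P (t.1+1) (Fin.snoc s true) * l true q)|
      ≤ (n:ℝ) * epsF l α β := key
    _ = epsF l α β * n := mul_comm _ _


end Scandiction
end
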